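/- arXiv:1708.02185 — 7 statements merged into one kernel-verified Lean document; each statement's English description precedes it below -/
import Mathlib

section
/- If G is a finite graph with χ(G) > 2 such that for every vertex v the graph G − v is 2-colorable, then χ(G) = 3 and G is an odd cycle. -/
open Set

/-- An axis-parallel box in `ℝ^d`: a product of nonempty closed intervals. -/
def IsBoxIn (d : ℕ) (s : Set (Fin d → ℝ)) : Prop :=
  ∃ lo hi : Fin d → ℝ, (∀ i, lo i ≤ hi i) ∧
    s = {x | ∀ i, x i ∈ Set.Icc (lo i) (hi i)}

/-- A `p`-box in `ℝ^d`: a product of nonempty closed intervals, exactly `d - p`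
of which are degenerate (single points). -/
def IsPBoxIn (p d : ℕ) (s : Set (Fin d → ℝ)) : Prop :=
  ∃ lo hi : Fin d → ℝ, (∀ i, lo i ≤ hi i) ∧
    {i : Fin d | lo i = hi i}.ncard = d - p ∧
    s = {x | ∀ i, x i ∈ Set.Icc (lo i) (hi i)}

/-- A graph is an interval graph if it is the intersection graph of a family of
closed real intervals. -/
def IsIntervalGraph {V : Type*} (G : SimpleGraph V) : Prop :=
  ∃ a b : V → ℝ, (∀ v, a v ≤ b v) ∧
    ∀ u v : V, u ≠ v →
      (G.Adj u v ↔ (Set.Icc (a u) (b u) ∩ Set.Icc (a v) (b v)).Nonempty)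

/-- `G` is the intersection graph of a family of `p`-boxes in `ℝ^d`. -/
def RealizableAsPBoxes {V : Type*} (p d : ℕ) (G : SimpleGraph V) : Prop :=
  ∃ B : V → Set (Fin d → ℝ), (∀ v, IsPBoxIn p d (B v)) ∧
    ∀ u v : V, u ≠ v → (G.Adj u v ↔ (B u ∩ B v).Nonempty)

/-- `G` is the intersection graph of a family of (full) axis-parallel boxes in `ℝ^d`. -/
def RealizableAsBoxes {V : Type*} (d : ℕ) (G : SimpleGraph V) : Prop :=
  ∃ B : V → Set (Fin d → ℝ), (∀ v, IsBoxIn d (B v)) ∧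
    ∀ u v : V, u ≠ v → (G.Adj u v ↔ (B u ∩ B v).Nonempty)

/-- The intersection graph of a family of sets in `ℝ^d`. -/
def intersectionGraph {ι : Type*} {d : ℕ} (B : ι → Set (Fin d → ℝ)) : SimpleGraph ι :=
  SimpleGraph.fromRel fun i j => (B i ∩ B j).Nonempty

/-- The family `B` can be pierced by at most `n` points. -/
def Pierceable {ι : Type*} {d : ℕ} (B : ι → Set (Fin d → ℝ)) (n : ℕ) : Prop :=
  ∃ P : Finset (Fin d → ℝ), P.card ≤ n ∧ ∀ i, ∃ p ∈ P, p ∈ B i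

/-- The subfamily of `B` indexed by `S` can be pierced by at most `n` points. -/
def PierceableOn {ι : Type*} {d : ℕ} (B : ι → Set (Fin d → ℝ)) (S : Finset ι) (n : ℕ) : Prop :=
  ∃ P : Finset (Fin d → ℝ), P.card ≤ n ∧ ∀ i ∈ S, ∃ p ∈ P, p ∈ B i

/-- The cycle graph on `s` vertices, with vertex set `ZMod s`. -/
def cyc (s : ℕ) : SimpleGraph (ZMod s) := SimpleGraph.fromRel fun i j => j = i + 1

/-- The boxicity of a graph, as an extended natural number. -/
noncomputable def boxicity {V : Type*} (G : SimpleGraph V) : ℕ∞ :=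
  sInf {n : ℕ∞ | ∃ k : ℕ, n = k ∧ RealizableAsBoxes k G}

/-- The `p`-boxicity of a graph: the least `d ≥ p` such that `G` is realizable as
`p`-boxes in `ℝ^d` (possibly `∞`). -/
noncomputable def pboxicity {V : Type*} (p : ℕ) (G : SimpleGraph V) : ℕ∞ :=
  sInf {n : ℕ∞ | ∃ k : ℕ, n = k ∧ p ≤ k ∧ RealizableAsPBoxes p k G}

/-! A shortest odd closed walk `w` exists because `G` is not 2-colorable, and it passes through
every vertex `v`, since otherwise it would be an odd closed walk in the 2-colorable graph `G - v`.
By minimality, no walk between two vertices of `w` is shorter than their distance along `w`; hence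
`w` repeats no vertex and has no chord, so `G` is the cycle traced by `w`. Finally `χ(G) ≤ 3`,
as a 2-coloring of `G - v` extends to `G` by giving `v` a third color. -/

open SimpleGraph

namespace SimpleGraph

variable {V : Type*} {G : SimpleGraph V}

theorem cyc_adj {s : ℕ} {i j : ZMod s} :
    (cyc s).Adj i j ↔ i ≠ j ∧ (j = i + 1 ∨ i = j + 1) := by
  simp [cyc, fromRel_adj]

theorem colorable_add_one_of_colorable_induce_compl {v : V} {n : ℕ}
    (h : (G.induce ({v}ᶜ : Set V)).Colorable n) : G.Colorable (n + 1) := by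
  classical
  obtain ⟨c⟩ := h
  refine ⟨Coloring.mk (fun x => if hx : x = v then Fin.last n else (c ⟨x, hx⟩).castSucc) ?_⟩
  intro x y hxy
  by_cases hx : x = v <;> by_cases hy : y = v
  · exact absurd (hx.trans hy.symm) hxy.ne
  · simpa [hx, hy] using (Fin.castSucc_lt_last _).ne'
  · simp [hx, hy]
  · simpa [hx, hy] using c.valid (induce_adj.2 hxy)

namespace Walk

theorem length_induce {s : Set V} {u v : V} (w : G.Walk u v) (hw : ∀ x ∈ w.support, x ∈ s) :
    (w.induce s hw).length = w.length := by
  conv_rhs => rw [← map_induce w hw]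
  exact (length_map _ _).symm

theorem mem_support_of_colorable_induce_compl {u v : V} (w : G.Walk u u) (hw : Odd w.length)
    (hv : (G.induce ({v}ᶜ : Set V)).Colorable 2) : v ∈ w.support := by
  by_contra hvw
  have hcompl : ∀ x ∈ w.support, x ∈ ({v}ᶜ : Set V) := fun x hx (hxv : x = v) => hvw (hxv ▸ hx)
  have := two_colorable_iff_forall_loop_even.mp hv _ (w.induce _ hcompl)
  rw [length_induce] at this
  exact Nat.not_even_iff_odd.mpr hw this

def IsShortestOddLoop {u : V} (w : G.Walk u u) : Prop :=
  Odd w.length ∧ ∀ x (c : G.Walk x x), Odd c.length → w.length ≤ c.length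

end Walk

theorem exists_isShortestOddLoop (h : ¬ G.Colorable 2) :
    ∃ (u : V) (w : G.Walk u u), w.IsShortestOddLoop := by
  classical
  have hex : ∃ n, ∃ (u : V) (w : G.Walk u u), Odd w.length ∧ w.length = n := by
    simp_rw [two_colorable_iff_forall_loop_even, not_forall, Nat.not_even_iff_odd] at h
    obtain ⟨u, w, hw⟩ := h
    exact ⟨_, u, w, hw, rfl⟩
  obtain ⟨u, w, hw, hlen⟩ := Nat.find_spec hex
  exact ⟨u, w, hw, fun x c hc => hlen ▸ Nat.find_min' hex ⟨x, c, hc, rfl⟩⟩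

namespace Walk.IsShortestOddLoop

variable {u : V} {w : G.Walk u u}

theorem three_le_length (hw : w.IsShortestOddLoop) : 3 ≤ w.length := by
  obtain ⟨k, hk⟩ := hw.1
  suffices w.length ≠ 1 by omega
  intro h1
  have hadj := w.adj_getVert_succ (i := 0) (by omega)
  rw [getVert_zero, zero_add, ← h1, getVert_length] at hadj
  exact hadj.ne rfl

/-- If `w` splits at `x` and `y` into `p` and `r`, then a walk `q` from `x` to `y` closes up with
`p` or with `r` into an odd closed walk, depending on the parity of `q`. -/
theorem min_le_length (hw : w.IsShortestOddLoop) {x y : V} (p : G.Walk x y) (r : G.Walk y x)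
    (hpr : p.length + r.length = w.length) (q : G.Walk x y) :
    min p.length r.length ≤ q.length := by
  obtain ⟨hodd, hmin⟩ := hw
  have hsum : Odd ((p.length + q.length) + (q.length + r.length)) := by
    rw [show p.length + q.length + (q.length + r.length) = w.length + 2 * q.length by omega]
    exact hodd.add_even (even_two_mul _)
  rcases Nat.even_or_odd (p.length + q.length) with hpq | hpq
  · have := hmin x (q.append r) (by rw [length_append]; exact (Nat.odd_add'.mp hsum).mpr hpq)
    rw [length_append] at this
    omega
  · have := hmin x (p.append q.reverse) (by rwa [length_append, length_reverse])
    rw [length_append, length_reverse] at this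
    omega

theorem min_le_length_getVert (hw : w.IsShortestOddLoop) {a b : ℕ} (hab : a ≤ b)
    (hb : b ≤ w.length) (q : G.Walk (w.getVert a) (w.getVert b)) :
    min (b - a) (w.length - (b - a)) ≤ q.length := by
  have hend : (w.drop a).getVert (b - a) = w.getVert b := by
    rw [drop_getVert, Nat.add_sub_cancel' hab]
  let p := ((w.drop a).take (b - a)).copy rfl hend
  let r := (w.drop b).append (w.take a)
  have hp : p.length = b - a := by
    simp only [p, length_copy, take_length, drop_length]
    omega
  have hr : r.length = w.length - b + a := by
    simp only [r, length_append, take_length, drop_length]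
    omega
  have := hw.min_le_length p r (by omega) q
  rwa [hp, hr, show w.length - b + a = w.length - (b - a) by omega] at this

theorem getVert_injOn (hw : w.IsShortestOddLoop) : Set.InjOn w.getVert (Set.Iio w.length) := by
  intro a ha b hb hab
  wlog hle : a ≤ b generalizing a b
  · exact (this hb ha hab.symm (by omega)).symm
  have := hw.min_le_length_getVert hle (le_of_lt hb) (Walk.nil.copy rfl hab)
  simp only [length_copy, length_nil, Set.mem_Iio] at this ha hb
  omega

theorem eq_succ_or_of_adj_getVert (hw : w.IsShortestOddLoop) {a b : ℕ} (hab : a < b)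
    (hb : b < w.length) (hadj : G.Adj (w.getVert a) (w.getVert b)) :
    b = a + 1 ∨ (a = 0 ∧ b = w.length - 1) := by
  have := hw.min_le_length_getVert hab.le hb.le hadj.toWalk
  simp only [length_cons, length_nil] at this
  omega

theorem adj_getVert_val_iff (hw : w.IsShortestOddLoop) (i j : ZMod w.length) :
    G.Adj (w.getVert i.val) (w.getVert j.val) ↔ (cyc w.length).Adj i j := by
  have : NeZero w.length := ⟨hw.1.pos.ne'⟩
  have hcast : ∀ k : ZMod w.length, ((k.val + 1 : ℕ) : ZMod w.length) = k + 1 := fun k => by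
    push_cast
    rw [ZMod.natCast_zmod_val]
  have hsucc : ∀ k : ZMod w.length, G.Adj (w.getVert k.val) (w.getVert (k + 1).val) := by
    intro k
    have hk := w.adj_getVert_succ k.val_lt
    rw [← hcast, ZMod.val_natCast]
    rcases Nat.lt_or_ge (k.val + 1) w.length with hlt | hge
    · rwa [Nat.mod_eq_of_lt hlt]
    · have heq : k.val + 1 = w.length := le_antisymm k.val_lt hge
      rw [heq, getVert_length] at hk
      rwa [heq, Nat.mod_self, getVert_zero]
  have hchord : ∀ k l : ZMod w.length, k.val < l.val →
      G.Adj (w.getVert k.val) (w.getVert l.val) → l = k + 1 ∨ k = l + 1 := by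
    intro k l hkl hadj
    rcases hw.eq_succ_or_of_adj_getVert hkl l.val_lt hadj with h | ⟨hk, hl⟩
    · left
      rw [← hcast, ← h, ZMod.natCast_zmod_val]
    · right
      rw [← hcast, hl, Nat.sub_add_cancel hw.1.pos, ZMod.natCast_self, ← ZMod.val_eq_zero, hk]
  rw [cyc_adj]
  constructor
  · intro hadj
    have hne : i ≠ j := fun h => hadj.ne (by rw [h])
    refine ⟨hne, ?_⟩
    rcases lt_trichotomy i.val j.val with h | h | h
    · exact hchord i j h hadj
    · exact absurd (ZMod.val_injective _ h) hne
    · exact (hchord j i h hadj.symm).symm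
  · rintro ⟨-, rfl | rfl⟩
    · exact hsucc i
    · exact (hsucc j).symm

theorem getVert_val_bijective (hw : w.IsShortestOddLoop) (hsupp : ∀ v, v ∈ w.support) :
    Function.Bijective fun i : ZMod w.length => w.getVert i.val := by
  have : NeZero w.length := ⟨hw.1.pos.ne'⟩
  refine ⟨fun i j hij => ZMod.val_injective _ (hw.getVert_injOn i.val_lt j.val_lt hij), fun v => ?_⟩
  obtain ⟨n, rfl, hn⟩ := mem_support_iff_exists_getVert.mp (hsupp v)
  rcases hn.lt_or_eq with hlt | rfl
  · exact ⟨n, by simp only [ZMod.val_cast_of_lt hlt]⟩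
  · exact ⟨0, by simp only [ZMod.val_zero, getVert_zero, getVert_length]⟩

theorem nonempty_iso_cyc (hw : w.IsShortestOddLoop) (hsupp : ∀ v, v ∈ w.support) :
    Nonempty (G ≃g cyc w.length) :=
  ⟨RelIso.symm ⟨Equiv.ofBijective _ (hw.getVert_val_bijective hsupp), hw.adj_getVert_val_iff _ _⟩⟩

end Walk.IsShortestOddLoop

end SimpleGraph

theorem odd_cycle_of_vertex_critical_general {V : Type*} (G : SimpleGraph V)
    (h2 : 2 < G.chromaticNumber)
    (hv : ∀ v : V, (G.induce ({v}ᶜ : Set V)).Colorable 2) :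
    G.chromaticNumber = 3 ∧ ∃ s : ℕ, Odd s ∧ 3 ≤ s ∧ Nonempty (G ≃g cyc s) := by
  have hG : ¬ G.Colorable 2 := fun h => h2.not_ge h.chromaticNumber_le
  obtain ⟨u, w, hw⟩ := exists_isShortestOddLoop hG
  have hsupp : ∀ v, v ∈ w.support := fun v => w.mem_support_of_colorable_induce_compl hw.1 (hv v)
  have hχ : G.chromaticNumber ≤ 3 :=
    (colorable_add_one_of_colorable_induce_compl (hv u)).chromaticNumber_le
  exact ⟨le_antisymm hχ (w.three_le_chromaticNumber_of_odd_loop hw.1),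
    w.length, hw.1, hw.three_le_length, hw.nonempty_iso_cyc hsupp⟩

/-- if `χ(G) > 2` but deleting any vertex makes `G` 2-colorable, then
`χ(G) = 3` and `G` is an odd cycle. -/
theorem odd_cycle_of_vertex_critical {V : Type*} [Fintype V] (G : SimpleGraph V)
    (h2 : 2 < G.chromaticNumber)
    (hv : ∀ v : V, (G.induce ({v}ᶜ : Set V)).Colorable 2) :
    G.chromaticNumber = 3 ∧ ∃ s : ℕ, Odd s ∧ 3 ≤ s ∧ Nonempty (G ≃g cyc s) :=
  odd_cycle_of_vertex_critical_general G h2 hv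
end

section
/- If F is an interval graph on vertices v₁,…,v_s (s ≥ 7) containing all edges of the complete graph except possibly some edges of the cycle v₁⋯v_s, then at most 3 consecutive edges of the cycle can be missing from F. -/
open Set

/-- if `F` is an interval graph on the vertices `ZMod s` (`s ≥ 7`)
containing all edges of the complete graph except possibly some edges of the cycle
`v₁⋯v_s`, then no four consecutive cycle edges can all be missing from `F`. -/
theorem interval_graph_at_most_three_consecutive_missing (s : ℕ) (hs : 7 ≤ s)
    (F : SimpleGraph (ZMod s)) (hF : IsIntervalGraph F)
    (honly : ∀ u v : ZMod s, u ≠ v → ¬ F.Adj u v → v = u + 1 ∨ u = v + 1) :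
    ∀ i : ZMod s, ¬ (¬ F.Adj i (i + 1) ∧ ¬ F.Adj (i + 1) (i + 2) ∧
      ¬ F.Adj (i + 2) (i + 3) ∧ ¬ F.Adj (i + 3) (i + 4)) := by
  rintro i ⟨h1, -, -, h4⟩
  obtain ⟨a, b, hab, hiff⟩ := hF
  have hne : ∀ m n : ℕ, m < n → n < s → (i + (m : ZMod s)) ≠ (i + (n : ZMod s)) := by
    intro m n hmn hn h
    have h2 := add_left_cancel h
    have h3 := congrArg ZMod.val h2
    rw [ZMod.val_cast_of_lt (by omega), ZMod.val_cast_of_lt hn] at h3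
    omega
  have n01 : i ≠ i + 1 := by
    have h := hne 0 1 (by omega) (by omega); push_cast at h; simpa using h
  have n03 : i ≠ i + 3 := by
    have h := hne 0 3 (by omega) (by omega); push_cast at h; simpa using h
  have n04 : i ≠ i + 4 := by
    have h := hne 0 4 (by omega) (by omega); push_cast at h; simpa using h
  have n05 : i ≠ i + 5 := by
    have h := hne 0 5 (by omega) (by omega); push_cast at h; simpa using h
  have n13 : i + 1 ≠ i + 3 := by
    have h := hne 1 3 (by omega) (by omega); push_cast at h; simpa using h
  have n14 : i + 1 ≠ i + 4 := by
    have h := hne 1 4 (by omega) (by omega); push_cast at h; simpa using h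
  have n15 : i + 1 ≠ i + 5 := by
    have h := hne 1 5 (by omega) (by omega); push_cast at h; simpa using h
  have n23 : i + 2 ≠ i + 3 := by
    have h := hne 2 3 (by omega) (by omega); push_cast at h; simpa using h
  have n24 : i + 2 ≠ i + 4 := by
    have h := hne 2 4 (by omega) (by omega); push_cast at h; simpa using h
  have n34 : i + 3 ≠ i + 4 := by
    have h := hne 3 4 (by omega) (by omega); push_cast at h; simpa using h
  -- the four "present" edges of the induced C4 on {i, i+3, i+1, i+4}
  have hxy : F.Adj i (i + 3) := by
    by_contra hc
    rcases honly _ _ n03 hc with h | h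
    · exact n13 h.symm
    · rw [add_assoc] at h; norm_num at h; exact n04 (by rw [h, add_zero])
  have hyz : F.Adj (i + 3) (i + 1) := by
    by_contra hc
    rcases honly _ _ n13.symm hc with h | h
    · rw [add_assoc] at h; norm_num at h; exact n14 (by rw [h])
    · rw [add_assoc] at h; norm_num at h; exact n23 (by rw [h])
  have hzw : F.Adj (i + 1) (i + 4) := by
    by_contra hc
    rcases honly _ _ n14 hc with h | h
    · rw [add_assoc] at h; norm_num at h; exact n24 (by rw [h])
    · rw [add_assoc] at h; norm_num at h; exact n15 (by rw [h])
  have hwx : F.Adj (i + 4) i := by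
    by_contra hc
    rcases honly _ _ n04.symm hc with h | h
    · rw [add_assoc] at h; norm_num at h; exact n05 (by rw [h, add_zero])
    · exact n14 h.symm
  -- intersection criterion for intervals
  have key : ∀ u v : ZMod s,
      ((Set.Icc (a u) (b u)) ∩ (Set.Icc (a v) (b v))).Nonempty ↔
        (a u ≤ b v ∧ a v ≤ b u) := by
    intro u v
    rw [Set.Icc_inter_Icc, Set.nonempty_Icc, max_le_iff, le_min_iff, le_min_iff]
    have hu := hab u
    have hv := hab v
    tauto
  have A1 := (key _ _).mp ((hiff _ _ n03).mp hxy)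
  have A2 := (key _ _).mp ((hiff _ _ n13.symm).mp hyz)
  have A3 := (key _ _).mp ((hiff _ _ n14).mp hzw)
  have A4 := (key _ _).mp ((hiff _ _ n04.symm).mp hwx)
  have D1 : ¬ (a i ≤ b (i + 1) ∧ a (i + 1) ≤ b i) :=
    fun h => h1 ((hiff _ _ n01).mpr ((key _ _).mpr h))
  have D2 : ¬ (a (i + 3) ≤ b (i + 4) ∧ a (i + 4) ≤ b (i + 3)) :=
    fun h => h4 ((hiff _ _ n34).mpr ((key _ _).mpr h))
  rw [not_and_or, not_le, not_le] at D1 D2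
  rcases D1 with d1 | d1 <;> rcases D2 with d2 | d2 <;>
    linarith [A1.1, A1.2, A2.1, A2.2, A3.1, A3.2, A4.1, A4.2]
end

section
/- A graph G on n vertices is the intersection graph of a family of axis-parallel p-dimensional boxes in ℝ^d (p ≤ d) if and only if G satisfies the p-slim box property in ℝ^d: there exist interval graphs F₁,…,F_d on V(G) with G = F₁ ∩ ⋯ ∩ F_d, and for every vertex v there is a set J_v ⊆ {1,…,d} of size d − p such that for each i ∈ J_v the neighborhood of v in F_i induces a complete subgraph of F_i. -/
open Set

open Function Filter Topology

/-!
A `p`-box is the product of its coordinate intervals, so `G` is the intersection of the interval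
graphs of the coordinate projections, and a vertex whose `i`-th interval is a point `x` is
simplicial in the `i`-th of them: all its neighbours contain `x`.

Conversely, take interval models of the `Fᵢ`. Lengthening every interval by less than the smallest
gap between two disjoint intervals makes all of them nondegenerate without changing `Fᵢ`. Then, one
vertex at a time, shrink the `i`-th interval of `v` (for `i ∈ J_v`) to a point `c` common to the
intervals of its closed neighbourhood; these pairwise intersect, since `v` is simplicial, so the
largest left endpoint is such a point. This does not change `Fᵢ`, because the intervals meeting
`{c}` are those of the neighbours of `v`, and each of them meets the old interval of `v` at `c`.
-/

lemma Icc_inter_Icc_nonempty_iff {α : Type*} [LinearOrder α] {a b c d : α} (hab : a ≤ b)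
    (hcd : c ≤ d) : (Icc a b ∩ Icc c d).Nonempty ↔ a ≤ d ∧ c ≤ b := by
  rw [Icc_inter_Icc, nonempty_Icc, sup_le_iff, le_inf_iff, le_inf_iff]
  tauto

lemma setOf_forall_mem_inter_nonempty_iff {ι : Type*} {α : ι → Type*} (s t : ∀ i, Set (α i)) :
    ({x : ∀ i, α i | ∀ i, x i ∈ s i} ∩ {x | ∀ i, x i ∈ t i}).Nonempty ↔ ∀ i, (s i ∩ t i).Nonempty :=
  ⟨fun ⟨x, hs, ht⟩ i => ⟨x i, hs i, ht i⟩,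
    fun h => ⟨fun i => (h i).some, fun i => (h i).some_mem.1, fun i => (h i).some_mem.2⟩⟩

lemma exists_forall_mem_Icc_of_le {ι : Type*} {s : Set ι} (hs : s.Finite) {a b : ι → ℝ}
    (h : ∀ i ∈ s, ∀ j ∈ s, a i ≤ b j) : ∃ c, ∀ i ∈ s, c ∈ Icc (a i) (b i) :=
  ⟨sSup (a '' s), fun i hi =>
    ⟨le_csSup (hs.image a).bddAbove (mem_image_of_mem a hi),
      csSup_le ⟨a i, mem_image_of_mem a hi⟩ (forall_mem_image.2 fun j hj => h j hj i hi)⟩⟩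

lemma exists_pos_forall_le_add_imp_le {ι : Type*} [Finite ι] (x y : ι → ℝ) :
    ∃ ε > 0, ∀ i, x i ≤ y i + ε → x i ≤ y i := by
  have hε : ∀ᶠ ε in 𝓝[>] (0 : ℝ), ∀ i, x i ≤ y i + ε → x i ≤ y i :=
    Filter.eventually_all.2 fun i => by
      rcases le_or_gt (x i) (y i) with h | h
      · exact Filter.Eventually.of_forall fun _ _ => h
      · filter_upwards [Ioo_mem_nhdsGT (sub_pos.2 h)] with ε hε hle
        linarith [hε.2]
  obtain ⟨ε, hε, hpos⟩ := (hε.and self_mem_nhdsWithin).exists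
  exact ⟨ε, hpos, hε⟩

section IntervalGraph

variable {V : Type*}

def intervalGraph (a b : V → ℝ) : SimpleGraph V where
  Adj u v := u ≠ v ∧ (Icc (a u) (b u) ∩ Icc (a v) (b v)).Nonempty
  symm := ⟨fun _ _ h => ⟨h.1.symm, by rw [inter_comm]; exact h.2⟩⟩
  loopless := ⟨fun _ h => h.1 rfl⟩

@[simp]
lemma intervalGraph_adj {a b : V → ℝ} {u v : V} :
    (intervalGraph a b).Adj u v ↔ u ≠ v ∧ (Icc (a u) (b u) ∩ Icc (a v) (b v)).Nonempty :=
  Iff.rfl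

lemma isIntervalGraph_iff {F : SimpleGraph V} :
    IsIntervalGraph F ↔ ∃ a b : V → ℝ, (∀ v, a v ≤ b v) ∧ F = intervalGraph a b := by
  refine exists₂_congr fun a b => and_congr_right fun _ => ⟨fun h => ?_, ?_⟩
  · ext u v
    exact ⟨fun huv => ⟨huv.ne, (h u v huv.ne).1 huv⟩, fun huv => (h u v huv.1).2 huv.2⟩
  · rintro rfl u v huv
    exact ⟨And.right, And.intro huv⟩

lemma isClique_neighborSet_intervalGraph {a b : V → ℝ} {v : V} (hv : a v = b v) :
    (intervalGraph a b).IsClique ((intervalGraph a b).neighborSet v) := by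
  have hmem : ∀ u ∈ (intervalGraph a b).neighborSet v, a v ∈ Icc (a u) (b u) := by
    rintro u ⟨-, t, htv, htu⟩
    rw [← hv, Icc_self, mem_singleton_iff] at htv
    exact htv ▸ htu
  exact fun u hu w hw huw => ⟨huw, a v, hmem u hu, hmem w hw⟩

lemma exists_strict_intervalGraph_eq [Finite V] {a b : V → ℝ} (hab : ∀ v, a v ≤ b v) :
    ∃ b' : V → ℝ, (∀ v, a v < b' v) ∧ intervalGraph a b' = intervalGraph a b := by
  obtain ⟨ε, hε, hgap⟩ := exists_pos_forall_le_add_imp_le (fun uw : V × V => a uw.1)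
    fun uw => b uw.2
  have hab' : ∀ v, a v < b v + ε := fun v => by linarith [hab v]
  have hle : ∀ u w, a u ≤ b w + ε ↔ a u ≤ b w := fun u w => ⟨hgap (u, w), fun h => by linarith⟩
  refine ⟨fun v => b v + ε, hab', ?_⟩
  ext u w
  simp only [intervalGraph_adj, Icc_inter_Icc_nonempty_iff (hab' u).le (hab' w).le,
    Icc_inter_Icc_nonempty_iff (hab u) (hab w), hle]

lemma exists_intervalGraph_update_eq [Finite V] [DecidableEq V] {a b : V → ℝ}
    (hab : ∀ v, a v ≤ b v) {v : V}
    (hv : (intervalGraph a b).IsClique ((intervalGraph a b).neighborSet v)) :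
    ∃ c, intervalGraph (update a v c) (update b v c) = intervalGraph a b := by
  set G := intervalGraph a b
  have hclosed : G.IsClique (insert v (G.neighborSet v)) := hv.insert fun _ hu _ => hu
  obtain ⟨c, hc⟩ := exists_forall_mem_Icc_of_le (s := insert v (G.neighborSet v)) (toFinite _)
    fun x hx y hy => by
      obtain rfl | hxy := eq_or_ne x y
      · exact hab x
      · obtain ⟨-, t, htx, hty⟩ := hclosed hx hy hxy
        exact htx.1.trans hty.2
  have hpoint : ∀ u ≠ v,
      ({c} ∩ Icc (a u) (b u)).Nonempty ↔ (Icc (a v) (b v) ∩ Icc (a u) (b u)).Nonempty := by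
    intro u huv
    rw [singleton_inter_nonempty]
    exact ⟨fun hcu => ⟨c, hc v (mem_insert v _), hcu⟩,
      fun h => hc u (mem_insert_of_mem v ⟨huv.symm, h⟩)⟩
  refine ⟨c, ?_⟩
  ext x y
  simp only [intervalGraph_adj, G]
  refine and_congr_right fun hxy => ?_
  obtain rfl | hx := eq_or_ne x v
  · simp only [update_self, update_of_ne hxy.symm, Icc_self]
    exact hpoint y hxy.symm
  obtain rfl | hy := eq_or_ne y v
  · simp only [update_self, update_of_ne hxy, Icc_self]
    rw [inter_comm, hpoint x hxy, inter_comm]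
  · simp only [update_of_ne hx, update_of_ne hy]

lemma exists_intervalGraph_eq_degenerate_iff [Finite V] {a b : V → ℝ} (hab : ∀ v, a v < b v)
    (S : Set V) (hS : ∀ v ∈ S, (intervalGraph a b).IsClique ((intervalGraph a b).neighborSet v)) :
    ∃ a' b' : V → ℝ, (∀ v, a' v ≤ b' v) ∧ intervalGraph a' b' = intervalGraph a b ∧
      ∀ v, a' v = b' v ↔ v ∈ S := by
  classical
  induction S, S.toFinite using Set.Finite.induction_on with
  | empty => exact ⟨a, b, fun v => (hab v).le, rfl, fun v => iff_of_false (hab v).ne id⟩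
  | @insert v S _ _ ih =>
    obtain ⟨a', b', hab', hG, hdeg⟩ := ih fun u hu => hS u (mem_insert_of_mem v hu)
    obtain ⟨c, hc⟩ := exists_intervalGraph_update_eq hab' (v := v) (hG ▸ hS v (mem_insert v S))
    refine ⟨update a' v c, update b' v c, fun u => ?_, hc.trans hG, fun u => ?_⟩
    all_goals obtain rfl | hu := eq_or_ne u v
    · simp
    · simpa only [update_of_ne hu] using hab' u
    · simp
    · simpa only [update_of_ne hu, mem_insert_iff, hu, false_or] using hdeg u

lemma IsIntervalGraph.exists_degenerate_iff [Finite V] {F : SimpleGraph V} (hF : IsIntervalGraph F)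
    (S : Set V) (hS : ∀ v ∈ S, F.IsClique (F.neighborSet v)) :
    ∃ a b : V → ℝ, (∀ v, a v ≤ b v) ∧ F = intervalGraph a b ∧ ∀ v, a v = b v ↔ v ∈ S := by
  obtain ⟨a, b, hab, rfl⟩ := isIntervalGraph_iff.1 hF
  obtain ⟨b', hab', hG⟩ := exists_strict_intervalGraph_eq hab
  obtain ⟨a'', b'', hab'', hG', hdeg⟩ := exists_intervalGraph_eq_degenerate_iff hab' S (hG ▸ hS)
  exact ⟨a'', b'', hab'', (hG'.trans hG).symm, hdeg⟩

lemma realizableAsPBoxes_iff {p d : ℕ} {G : SimpleGraph V} :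
    RealizableAsPBoxes p d G ↔ ∃ lo hi : Fin d → V → ℝ, (∀ i v, lo i v ≤ hi i v) ∧
      (∀ v, {i | lo i v = hi i v}.ncard = d - p) ∧ G = ⨅ i, intervalGraph (lo i) (hi i) := by
  constructor
  · rintro ⟨B, hB, hadj⟩
    choose lo hi hle hdeg hB using hB
    refine ⟨fun i v => lo v i, fun i v => hi v i, fun i v => hle v i, hdeg, ?_⟩
    ext u v
    simp only [SimpleGraph.iInf_adj, intervalGraph_adj]
    refine ⟨fun h => ?_, fun ⟨h, huv⟩ => ?_⟩
    · have hmeet := (hadj u v h.ne).1 h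
      rw [hB u, hB v, setOf_forall_mem_inter_nonempty_iff] at hmeet
      exact ⟨fun i => ⟨h.ne, hmeet i⟩, h.ne⟩
    · rw [hadj u v huv, hB u, hB v, setOf_forall_mem_inter_nonempty_iff]
      exact fun i => (h i).2
  · rintro ⟨lo, hi, hle, hdeg, rfl⟩
    refine ⟨fun v => {x | ∀ i, x i ∈ Icc (lo i v) (hi i v)},
      fun v => ⟨fun i => lo i v, fun i => hi i v, fun i => hle i v, hdeg v, rfl⟩, fun u v huv => ?_⟩
    rw [SimpleGraph.iInf_adj, setOf_forall_mem_inter_nonempty_iff]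
    simp [huv]

end IntervalGraph

theorem realizable_as_pboxes_iff_slim_general {V : Type*} [Fintype V] (p d : ℕ)
    (G : SimpleGraph V) :
    RealizableAsPBoxes p d G ↔
      ∃ F : Fin d → SimpleGraph V, (∀ i, IsIntervalGraph (F i)) ∧ G = (⨅ i, F i) ∧
        ∀ v : V, ∃ J : Finset (Fin d), J.card = d - p ∧
          ∀ i ∈ J, ∀ u w : V, (F i).Adj v u → (F i).Adj v w → u ≠ w → (F i).Adj u w := by
  rw [realizableAsPBoxes_iff]
  constructor
  · rintro ⟨lo, hi, hle, hdeg, rfl⟩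
    refine ⟨fun i => intervalGraph (lo i) (hi i), fun i => isIntervalGraph_iff.2 ⟨_, _, hle i, rfl⟩,
      rfl, fun v => ⟨{i | lo i v = hi i v}.toFinset, by rw [← ncard_eq_toFinset_card', hdeg], ?_⟩⟩
    intro i hiJ u w hu hw huw
    exact isClique_neighborSet_intervalGraph (by simpa using hiJ) hu hw huw
  · rintro ⟨F, hF, rfl, hslim⟩
    choose J hJcard hJ using hslim
    choose lo hi hle hFi hdeg using fun i => (hF i).exists_degenerate_iff {v | i ∈ J v}
      fun v hv u hu w hw huw => hJ v i hv u w hu hw huw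
    refine ⟨lo, hi, hle, fun v => ?_, by simp only [hFi]⟩
    have hdegv : {i | lo i v = hi i v} = ↑(J v) := ext fun i => hdeg i v
    rw [hdegv, ncard_coe_finset, hJcard]

/-- `G` is realizable as `p`-boxes in `ℝ^d` iff it has the `p`-slim box
property in `ℝ^d`. -/
theorem realizable_as_pboxes_iff_slim {V : Type*} [Fintype V] (p d : ℕ) (hpd : p ≤ d)
    (G : SimpleGraph V) :
    RealizableAsPBoxes p d G ↔
      ∃ F : Fin d → SimpleGraph V, (∀ i, IsIntervalGraph (F i)) ∧ G = (⨅ i, F i) ∧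
        ∀ v : V, ∃ J : Finset (Fin d), J.card = d - p ∧
          ∀ i ∈ J, ∀ u w : V, (F i).Adj v u → (F i).Adj v w → u ≠ w → (F i).Adj u w :=
  realizable_as_pboxes_iff_slim_general p d G
end

section
/- For every s ≥ 7 and every d ≥ 1, the complement of the cycle C_s is not the intersection graph of any family of degenerate (1-dimensional) axis-parallel segments in ℝ^d; i.e., the complement of C_s is not realizable as 1-boxes in ℝ^d. -/
/-!
A 1-box is a segment parallel to one coordinate axis. Number the vertices of `C_s` by `0, 1, 2, …`;
the segments `a` and `b` meet when `2 ≤ b - a ≤ 5` and are disjoint when `b = a + 1`.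

If segments `a` and `a + 2` crossed at a point `q` (different axes), then every box meeting both
would contain `q`, since each coordinate of `q` is a coordinate of one of the two meeting points;
so `q` would lie in the disjoint segments `a + 4` and `a + 5`. Hence `0, 2, 4` lie on one
axis-parallel line through a point `p ∈ 0 ∩ 3`, and `1, 3` on another line through `p`. If the two
lines have different directions, `p` is their only common point, so the point of `1 ∩ 4` is `p`,
contradicting `0 ∩ 1 = ∅`. If they have the same direction they coincide, and on that line the
segments `0, 3, 1, 4` would be intervals forming an induced 4-cycle, which is impossible.
-/

open Set

open Function

section AxisLine

variable {ι α : Type*}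

def axisLine (i : ι) (c : ι → α) : Set (ι → α) := {x | ∀ k ≠ i, x k = c k}

theorem mem_axisLine_self (i : ι) (c : ι → α) : c ∈ axisLine i c := fun _ _ => rfl

theorem update_eq_of_mem_axisLine [DecidableEq ι] {i : ι} {c x : ι → α}
    (hx : x ∈ axisLine i c) : update c i (x i) = x := by
  ext k
  rcases eq_or_ne k i with rfl | hk
  · simp
  · simp [hk, hx k hk]

theorem mem_uIcc_of_mem_axisLine [LinearOrder α] {i j : ι} (hij : i ≠ j) {q r t : ι → α}
    (hr : r ∈ axisLine i q) (ht : t ∈ axisLine j q) : q ∈ uIcc r t := by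
  rw [← pi_univ_uIcc]
  intro k _
  rcases eq_or_ne k i with rfl | hk
  · rw [← ht k hij]; exact right_mem_uIcc
  · rw [← hr k hk]; exact left_mem_uIcc

theorem eq_of_mem_axisLine_of_ne [LinearOrder α] {i j : ι} (hij : i ≠ j) {c x : ι → α}
    (hi : x ∈ axisLine i c) (hj : x ∈ axisLine j c) : x = c := by
  simpa [eq_comm] using mem_uIcc_of_mem_axisLine hij hi hj

end AxisLine

theorem Set.OrdConnected.inter_nonempty_of_four_cycle {α : Type*} [LinearOrder α]
    {A B C D : Set α} (hA : A.OrdConnected) (hB : B.OrdConnected) (hC : C.OrdConnected)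
    (hD : D.OrdConnected) (hAB : Disjoint A B) {a a' b b' : α} (ha : a ∈ A ∩ C)
    (ha' : a' ∈ A ∩ D) (hb : b ∈ B ∩ C) (hb' : b' ∈ B ∩ D) : (C ∩ D).Nonempty := by
  wlog haa' : a ≤ a' generalizing C D a a' b b'
  · exact (this hD hC ha' ha hb' hb (le_of_not_ge haa')).mono fun _ h => ⟨h.2, h.1⟩
  have hBA := disjoint_right.1 hAB
  rcases le_or_gt a' b with ha'b | hba'
  · exact ⟨a', hC.uIcc_subset ha.2 hb.2 (Icc_subset_uIcc ⟨haa', ha'b⟩), ha'.2⟩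
  have hba : b < a := lt_of_not_ge fun hab => hBA hb.1 (hA.out ha.1 ha'.1 ⟨hab, hba'.le⟩)
  have hb'a : b' ≤ a := le_of_not_gt fun hab' => hBA (hB.out hb.1 hb'.1 ⟨hba.le, hab'.le⟩) ha.1
  exact ⟨a, hC.uIcc_subset ha.2 hb.2 left_mem_uIcc,
    hD.uIcc_subset ha'.2 hb'.2 (Icc_subset_uIcc' ⟨hb'a, haa'⟩)⟩

theorem Set.OrdConnected.inter_nonempty_of_four_cycle_of_subset_axisLine {ι α : Type*}
    [DecidableEq ι] [LinearOrder α] {i : ι} {c : ι → α} {A B C D : Set (ι → α)}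
    (hA : A.OrdConnected) (hB : B.OrdConnected) (hC : C.OrdConnected) (hD : D.OrdConnected)
    (hAB : Disjoint A B) (hAL : A ⊆ axisLine i c) (hBL : B ⊆ axisLine i c) {a a' b b' : ι → α}
    (ha : a ∈ A ∩ C) (ha' : a' ∈ A ∩ D) (hb : b ∈ B ∩ C) (hb' : b' ∈ B ∩ D) :
    (C ∩ D).Nonempty := by
  have hmem {x : ι → α} {E F : Set (ι → α)} (hE : E ⊆ axisLine i c) (hx : x ∈ E ∩ F) :
      x i ∈ update c i ⁻¹' E ∩ update c i ⁻¹' F := by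
    rwa [← preimage_inter, mem_preimage, update_eq_of_mem_axisLine (hE hx.1)]
  obtain ⟨s, hs⟩ := (hA.preimage_mono update_mono).inter_nonempty_of_four_cycle
    (hB.preimage_mono update_mono) (hC.preimage_mono update_mono)
    (hD.preimage_mono update_mono) (hAB.preimage _) (hmem hAL ha) (hmem hAL ha')
    (hmem hBL hb) (hmem hBL hb')
  exact ⟨_, hs⟩

def IsAxisSegment {ι α : Type*} [Preorder α] (i : ι) (S : Set (ι → α)) : Prop :=
  ∃ lo hi : ι → α, (∀ k ≠ i, lo k = hi k) ∧ S = Icc lo hi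

namespace IsAxisSegment

variable {ι α : Type*} {i j : ι} {S U V : Set (ι → α)}

theorem ordConnected [Preorder α] (h : IsAxisSegment i S) : S.OrdConnected := by
  obtain ⟨lo, hi, -, rfl⟩ := h
  infer_instance

theorem subset_axisLine [PartialOrder α] (h : IsAxisSegment i S) {x c : ι → α} (hx : x ∈ S)
    (hxc : x ∈ axisLine i c) : S ⊆ axisLine i c := by
  obtain ⟨lo, hi, hlohi, rfl⟩ := h
  have hfixed {y} (hy : y ∈ Icc lo hi) (k) (hk : k ≠ i) : y k = lo k :=
    le_antisymm (hlohi k hk ▸ hy.2 k) (hy.1 k)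
  intro y hy k hk
  rw [hfixed hy k hk, ← hfixed hx k hk, hxc k hk]

theorem mem_of_crossing [LinearOrder α] (hU : IsAxisSegment i U) (hV : IsAxisSegment j V)
    (hij : i ≠ j) {q lo hi : ι → α} (hq : q ∈ U ∩ V) (hUW : (U ∩ Icc lo hi).Nonempty)
    (hVW : (V ∩ Icc lo hi).Nonempty) : q ∈ Icc lo hi := by
  obtain ⟨r, hrU, hrW⟩ := hUW
  obtain ⟨t, htV, htW⟩ := hVW
  exact uIcc_subset_Icc hrW htW <| mem_uIcc_of_mem_axisLine hij
    (hU.subset_axisLine hq.1 (mem_axisLine_self i q) hrU)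
    (hV.subset_axisLine hq.2 (mem_axisLine_self j q) htV)

end IsAxisSegment

theorem IsPBoxIn.exists_isAxisSegment {d : ℕ} {S : Set (Fin d → ℝ)} (h : IsPBoxIn 1 d S)
    (hd : 1 ≤ d) : ∃ i, IsAxisSegment i S := by
  obtain ⟨lo, hi, -, hcard, rfl⟩ := h
  have hfree : {k : Fin d | lo k = hi k}ᶜ.ncard = 1 := by
    have := ncard_add_ncard_compl {k : Fin d | lo k = hi k}
    rw [Nat.card_eq_fintype_card, Fintype.card_fin] at this
    omega
  obtain ⟨i, hfree_eq⟩ := ncard_eq_one.1 hfree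
  refine ⟨i, lo, hi, fun k hk => ?_, ?_⟩
  · by_contra hne
    have hk_free : k ∈ {k | lo k = hi k}ᶜ := hne
    exact hk (by simpa [hfree_eq] using hk_free)
  · ext x
    simp [Pi.le_def, forall_and]

section SegmentFamily

variable {ι α : Type*} [LinearOrder α] {S : ℕ → Set (ι → α)} {axis : ℕ → ι}

theorem axis_add_two_eq (hS : ∀ a, IsAxisSegment (axis a) (S a))
    (hmeet : ∀ a b, a + 2 ≤ b → b ≤ a + 5 → (S a ∩ S b).Nonempty)
    (hdisj : ∀ a, Disjoint (S a) (S (a + 1))) (a : ℕ) : axis (a + 2) = axis a := by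
  by_contra hne
  obtain ⟨q, hq⟩ := hmeet a (a + 2) le_rfl (by omega)
  have hq_mem (b : ℕ) (h₄ : a + 4 ≤ b) (h₅ : b ≤ a + 5) : q ∈ S b := by
    obtain ⟨lo, hi, -, hb⟩ := hS b
    have hab := hmeet a b (by omega) h₅
    have hab' := hmeet (a + 2) b (by omega) (by omega)
    rw [hb] at hab hab' ⊢
    exact (hS a).mem_of_crossing (hS (a + 2)) (Ne.symm hne) hq hab hab'
  exact disjoint_left.1 (hdisj (a + 4)) (hq_mem _ le_rfl (by omega)) (hq_mem _ (by omega) le_rfl)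

theorem false_of_segments_meet_two_to_five_apart [DecidableEq ι]
    (hS : ∀ a, IsAxisSegment (axis a) (S a))
    (hmeet : ∀ a b, a + 2 ≤ b → b ≤ a + 5 → (S a ∩ S b).Nonempty)
    (hdisj : ∀ a, Disjoint (S a) (S (a + 1))) : False := by
  have hax := axis_add_two_eq hS hmeet hdisj
  obtain ⟨p, hp0, hp3⟩ := hmeet 0 3 (by omega) (by omega)
  have hL0 : S 0 ⊆ axisLine (axis 0) p := (hS 0).subset_axisLine hp0 (mem_axisLine_self _ _)
  have hL2 : S 2 ⊆ axisLine (axis 0) p := by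
    obtain ⟨y, hy0, hy2⟩ := hmeet 0 2 le_rfl (by omega)
    exact (hax 0 ▸ hS 2).subset_axisLine hy2 (hL0 hy0)
  have hL4 : S 4 ⊆ axisLine (axis 0) p := by
    obtain ⟨y, hy2, hy4⟩ := hmeet 2 4 le_rfl (by omega)
    exact (hax 0 ▸ hax 2 ▸ hS 4).subset_axisLine hy4 (hL2 hy2)
  have hL3 : S 3 ⊆ axisLine (axis 1) p :=
    (hax 1 ▸ hS 3).subset_axisLine hp3 (mem_axisLine_self _ _)
  obtain ⟨t, ht1, ht3⟩ := hmeet 1 3 le_rfl (by omega)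
  have hL1 : S 1 ⊆ axisLine (axis 1) p := (hS 1).subset_axisLine ht1 (hL3 ht3)
  obtain ⟨q, hq1, hq4⟩ := hmeet 1 4 (by omega) (by omega)
  obtain ⟨r, hr0, hr4⟩ := hmeet 0 4 (by omega) (by omega)
  rcases eq_or_ne (axis 0) (axis 1) with hij | hij
  · obtain ⟨x, hx3, hx4⟩ := (hS 0).ordConnected.inter_nonempty_of_four_cycle_of_subset_axisLine
      (hS 1).ordConnected (hS 3).ordConnected (hS 4).ordConnected (hdisj 0) hL0 (hij ▸ hL1)
      ⟨hp0, hp3⟩ ⟨hr0, hr4⟩ ⟨ht1, ht3⟩ ⟨hq1, hq4⟩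
    exact disjoint_left.1 (hdisj 3) hx3 hx4
  · have hqp : q = p := eq_of_mem_axisLine_of_ne hij (hL4 hq4) (hL1 hq1)
    exact disjoint_left.1 (hdisj 0) hp0 (hqp ▸ hq1)

end SegmentFamily

theorem ZMod.natCast_ne_natCast_of_lt {s a b : ℕ} (hab : a < b) (hbs : b < a + s) :
    (a : ZMod s) ≠ b := by
  rw [Ne, ZMod.natCast_eq_natCast_iff, Nat.modEq_iff_dvd' hab.le]
  intro hdvd
  have := Nat.le_of_dvd (by omega) hdvd
  omega

theorem compl_cyc_adj_natCast {s a b : ℕ} (h₁ : a + 2 ≤ b) (h₂ : b + 2 ≤ a + s) :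
    (cyc s)ᶜ.Adj (a : ZMod s) b := by
  have hab : (a : ZMod s) ≠ b := ZMod.natCast_ne_natCast_of_lt (by omega) (by omega)
  have hab₁ : ((a + 1 : ℕ) : ZMod s) ≠ b := ZMod.natCast_ne_natCast_of_lt (by omega) (by omega)
  have hba₁ : (a : ZMod s) ≠ (b + 1 : ℕ) := ZMod.natCast_ne_natCast_of_lt (by omega) (by omega)
  push_cast at hab₁ hba₁
  simp only [SimpleGraph.compl_adj, cyc, SimpleGraph.fromRel_adj]
  tauto

theorem not_compl_cyc_adj_add_one {s : ℕ} (u : ZMod s) : ¬ (cyc s)ᶜ.Adj u (u + 1) := by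
  simp [cyc]

/-- for `s ≥ 7`, `d ≥ 1`, the complement of `C_s` is not realizable as
1-boxes (axis-parallel segments) in `ℝ^d`. -/
theorem compl_cycle_not_realizable_one_boxes (s d : ℕ) (hs : 7 ≤ s) (hd : 1 ≤ d) :
    ¬ RealizableAsPBoxes 1 d (cyc s)ᶜ := by
  rintro ⟨B, hbox, hadj⟩
  choose axis haxis using fun v => (hbox v).exists_isAxisSegment hd
  refine false_of_segments_meet_two_to_five_apart (S := fun a : ℕ => B a)
    (fun a => haxis a) (fun a b h₂ h₅ => ?_) (fun a => ?_)
  · exact (hadj _ _ (ZMod.natCast_ne_natCast_of_lt (by omega) (by omega))).1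
      (compl_cyc_adj_natCast h₂ (by omega))
  · rw [disjoint_iff_inter_eq_empty, ← not_nonempty_iff_eq_empty,
      ← hadj _ _ (ZMod.natCast_ne_natCast_of_lt (by omega) (by omega)), Nat.cast_succ]
    exact not_compl_cyc_adj_add_one _
end

section
/- For every s ≥ 9 and every d ≥ 2, the complement of the cycle C_s is not the intersection graph of any family of axis-parallel 2-dimensional boxes (2-boxes) in ℝ^d. -/
/-!
The boxes of the two ends of an edge `v, v + 1` of the cycle are disjoint, so some coordinate
`φ v` separates them. Since interval graphs have no induced 4-cycle, two edges of the cycle at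
distance at least 3 are separated along different coordinates, and a box meeting both ends of an
edge cannot be degenerate along the coordinate separating them. The box of `u` meets both ends of
the edges at `u + 2`, `u + 5` and `u + 6`, so it is nondegenerate along `φ (u + 2)`, `φ (u + 5)`
and `φ (u + 6)`, where the first differs from the other two; a 2-box has only two nondegenerate
coordinates, hence `φ (u + 5) = φ (u + 6)`. So `φ` is constant, contradicting `φ 0 ≠ φ 3`.
-/

open Set

variable {ι α V : Type*} [LinearOrder α]

theorem Set.Icc_inter_Icc_nonempty_iff {a₁ b₁ a₂ b₂ : α} :
    (Icc a₁ b₁ ∩ Icc a₂ b₂).Nonempty ↔ a₁ ≤ b₁ ∧ a₂ ≤ b₂ ∧ a₁ ≤ b₂ ∧ a₂ ≤ b₁ := by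
  rw [Icc_inter_Icc, nonempty_Icc, sup_le_iff, le_inf_iff, le_inf_iff]
  tauto

/-- Interval graphs contain no induced 4-cycle. -/
theorem Set.Icc_inter_nonempty_or_of_cycle {a₁ b₁ a₂ b₂ a₃ b₃ a₄ b₄ : α}
    (h₁₂ : (Icc a₁ b₁ ∩ Icc a₂ b₂).Nonempty) (h₂₃ : (Icc a₂ b₂ ∩ Icc a₃ b₃).Nonempty)
    (h₃₄ : (Icc a₃ b₃ ∩ Icc a₄ b₄).Nonempty) (h₄₁ : (Icc a₄ b₄ ∩ Icc a₁ b₁).Nonempty) :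
    (Icc a₁ b₁ ∩ Icc a₃ b₃).Nonempty ∨ (Icc a₂ b₂ ∩ Icc a₄ b₄).Nonempty := by
  simp only [Icc_inter_Icc_nonempty_iff] at *
  grind

theorem Set.Icc_inter_Icc_nonempty_iff_forall {l₁ u₁ l₂ u₂ : ι → α} :
    (Icc l₁ u₁ ∩ Icc l₂ u₂).Nonempty ↔ ∀ i, (Icc (l₁ i) (u₁ i) ∩ Icc (l₂ i) (u₂ i)).Nonempty := by
  simp only [Icc_inter_Icc, nonempty_Icc, Pi.le_def, Pi.sup_apply, Pi.inf_apply]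

theorem Set.eq_of_mem_of_ncard_le_two {S : Set ι} {a b c : ι} (hS : S.ncard ≤ 2)
    (ha : a ∈ S) (hb : b ∈ S) (hc : c ∈ S) (hab : a ≠ b) (hac : a ≠ c)
    (hfin : S.Finite := by toFinite_tac) : b = c := by
  by_contra hbc
  have := (two_lt_ncard_iff hfin).mpr ⟨a, b, c, ha, hb, hc, hab, hac, hbc⟩
  omega

/-- In the product order, `Icc (lo v) (hi v)` is the box `∏ i, [lo v i, hi v i]`. -/
def IsBoxRepresentation (G : SimpleGraph V) (lo hi : V → ι → α) : Prop :=
  ∀ u v, u ≠ v → (G.Adj u v ↔ (Icc (lo u) (hi u) ∩ Icc (lo v) (hi v)).Nonempty)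

def SeparatedAt (lo hi : V → ι → α) (i : ι) (u v : V) : Prop :=
  ¬(Icc (lo u i) (hi u i) ∩ Icc (lo v i) (hi v i)).Nonempty

theorem RealizableAsPBoxes.exists_isBoxRepresentation {p d : ℕ} {G : SimpleGraph V}
    (h : RealizableAsPBoxes p d G) : ∃ lo hi : V → Fin d → ℝ,
      (∀ v, {i | lo v i ≠ hi v i}.ncard ≤ p) ∧ IsBoxRepresentation G lo hi := by
  obtain ⟨B, hbox, hadj⟩ := h
  choose lo hi _ hdeg hB using hbox
  refine ⟨lo, hi, fun v => ?_, fun u v huv => ?_⟩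
  · have hcompl := ncard_add_ncard_compl {i | lo v i = hi v i}
    simp only [Nat.card_eq_fintype_card, Fintype.card_fin, hdeg v] at hcompl
    change {i | lo v i = hi v i}ᶜ.ncard ≤ p
    omega
  · have hIcc : ∀ w, B w = Icc (lo w) (hi w) := fun w => by
      rw [hB w, ← pi_univ_Icc]
      ext x
      simp [Pi.le_def, forall_and]
    rw [hadj u v huv, hIcc, hIcc]

namespace IsBoxRepresentation

variable {G : SimpleGraph V} {lo hi : V → ι → α}

theorem exists_separatedAt (h : IsBoxRepresentation G lo hi) {u v : V} (huv : u ≠ v)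
    (hnadj : ¬G.Adj u v) : ∃ i, SeparatedAt lo hi i u v := by
  by_contra! hsep
  exact hnadj ((h u v huv).2 (Icc_inter_Icc_nonempty_iff_forall.2 fun i => not_not.1 (hsep i)))

theorem inter_nonempty_of_adj (h : IsBoxRepresentation G lo hi) {u v : V} (hadj : G.Adj u v)
    (i : ι) : (Icc (lo u i) (hi u i) ∩ Icc (lo v i) (hi v i)).Nonempty :=
  Icc_inter_Icc_nonempty_iff_forall.1 ((h u v hadj.ne).1 hadj) i

theorem ne_of_separatedAt (h : IsBoxRepresentation G lo hi) {a a' b b' : V} {i j : ι}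
    (hab : G.Adj a b) (hba' : G.Adj b a') (ha'b' : G.Adj a' b') (hb'a : G.Adj b' a)
    (ha : SeparatedAt lo hi i a a') (hb : SeparatedAt lo hi j b b') : i ≠ j := by
  rintro rfl
  rcases Icc_inter_nonempty_or_of_cycle (h.inter_nonempty_of_adj hab i)
    (h.inter_nonempty_of_adj hba' i) (h.inter_nonempty_of_adj ha'b' i)
    (h.inter_nonempty_of_adj hb'a i) with ha' | hb'
  exacts [ha ha', hb hb']

theorem lo_ne_hi_of_separatedAt (h : IsBoxRepresentation G lo hi) {u a a' : V} {i : ι}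
    (hua : G.Adj u a) (hua' : G.Adj u a') (hsep : SeparatedAt lo hi i a a') :
    lo u i ≠ hi u i := by
  intro hdeg
  obtain ⟨x, ⟨hxu, hxa⟩⟩ := h.inter_nonempty_of_adj hua i
  obtain ⟨y, ⟨hyu, hya'⟩⟩ := h.inter_nonempty_of_adj hua' i
  have hxy : x = y := by
    rw [hdeg, Icc_self, mem_singleton_iff] at hxu hyu
    rw [hxu, hyu]
  exact hsep ⟨x, hxa, hxy ▸ hya'⟩

end IsBoxRepresentation

theorem cyc_adj_add_one {s : ℕ} (hs : s ≠ 1) (v : ZMod s) : (cyc s).Adj v (v + 1) := by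
  have : Nontrivial (ZMod s) := ZMod.nontrivial_iff.2 hs
  simp [cyc, SimpleGraph.fromRel_adj]

theorem compl_cyc_adj_add_natCast {s m : ℕ} (hm : 2 ≤ m) (hms : m + 2 ≤ s) (v : ZMod s) :
    (cyc s)ᶜ.Adj v (v + m) := by
  have hne : ∀ k : ℕ, 0 < k → k < s → (k : ZMod s) ≠ 0 := fun k hk hks hzero =>
    absurd (Nat.le_of_dvd hk ((ZMod.natCast_eq_zero_iff k s).1 hzero)) (by omega)
  obtain ⟨k, rfl⟩ : ∃ k, m = k + 1 := ⟨m - 1, by omega⟩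
  have h0 := hne (k + 1) (by omega) (by omega)
  have h1 := hne k (by omega) (by omega)
  have h2 := hne (k + 2) (by omega) (by omega)
  push_cast at h0 h2
  simp only [SimpleGraph.compl_adj, cyc, SimpleGraph.fromRel_adj, Nat.cast_add, Nat.cast_one]
  refine ⟨fun h => h0 (by linear_combination -h), fun ⟨_, h⟩ => h.elim
    (fun h => h1 (by linear_combination h)) (fun h => h2 (by linear_combination -h))⟩

section ComplCyc

variable {s : ℕ} {lo hi : ZMod s → ι → α} {φ : ZMod s → ι}

theorem IsBoxRepresentation.compl_cyc_separatedAt_ne (h : IsBoxRepresentation (cyc s)ᶜ lo hi)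
    (hφ : ∀ v, SeparatedAt lo hi (φ v) v (v + 1)) {m : ℕ} (hm : 3 ≤ m) (hms : m + 3 ≤ s)
    (a : ZMod s) : φ a ≠ φ (a + m) := by
  have hadj : ∀ (u : ZMod s) (k : ℕ), 2 ≤ k → k ≤ m + 1 → (cyc s)ᶜ.Adj u (u + k) :=
    fun u k hk hkm => compl_cyc_adj_add_natCast hk (by omega) u
  refine h.ne_of_separatedAt (hadj a m (by omega) (by omega)) ?_ ?_ ?_ (hφ a) (hφ (a + m))
  · have := hadj (a + 1) (m - 1) (by omega) (by omega)
    rw [Nat.cast_sub (by omega)] at this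
    convert this.symm using 1
    ring
  · simpa [add_right_comm] using hadj (a + 1) m (by omega) (by omega)
  · have := hadj a (m + 1) (by omega) le_rfl
    push_cast at this
    simpa [add_assoc] using this.symm

theorem IsBoxRepresentation.compl_cyc_lo_ne_hi (h : IsBoxRepresentation (cyc s)ᶜ lo hi)
    (hφ : ∀ v, SeparatedAt lo hi (φ v) v (v + 1)) {m : ℕ} (hm : 2 ≤ m) (hms : m + 3 ≤ s)
    (u : ZMod s) : lo u (φ (u + m)) ≠ hi u (φ (u + m)) := by
  refine h.lo_ne_hi_of_separatedAt (compl_cyc_adj_add_natCast hm (by omega) u) ?_ (hφ (u + m))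
  simpa [add_assoc] using compl_cyc_adj_add_natCast (m := m + 1) (by omega) (by omega) u

end ComplCyc

theorem not_isBoxRepresentation_compl_cyc [Finite ι] {s : ℕ} (hs : 9 ≤ s)
    {lo hi : ZMod s → ι → α} (hflat : ∀ v, {i | lo v i ≠ hi v i}.ncard ≤ 2) :
    ¬IsBoxRepresentation (cyc s)ᶜ lo hi := by
  intro h
  have hcyc := cyc_adj_add_one (s := s) (by omega)
  choose φ hφ using fun v => h.exists_separatedAt (hcyc v).ne fun hadj => hadj.2 (hcyc v)
  have hstep : ∀ u, φ (u + 5) = φ (u + 6) := fun u => by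
    have h2 := h.compl_cyc_lo_ne_hi hφ (m := 2) le_rfl (by omega) u
    have h5 := h.compl_cyc_lo_ne_hi hφ (m := 5) (by omega) (by omega) u
    have h6 := h.compl_cyc_lo_ne_hi hφ (m := 6) (by omega) (by omega) u
    have h25 := h.compl_cyc_separatedAt_ne hφ (m := 3) le_rfl (by omega) (u + 2)
    have h26 := h.compl_cyc_separatedAt_ne hφ (m := 4) (by omega) (by omega) (u + 2)
    push_cast at h2 h5 h6 h25 h26
    rw [add_assoc] at h25 h26
    norm_num at h25 h26
    exact eq_of_mem_of_ncard_le_two (hflat u) h2 h5 h6 h25 h26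
  have hconst : ∀ n : ℕ, φ n = φ 0 := fun n => by
    induction n with
    | zero => simp
    | succ n ih =>
      have := hstep (n - 5)
      rw [show (n : ZMod s) - 5 + 5 = n by ring, show (n : ZMod s) - 5 + 6 = n + 1 by ring] at this
      rw [Nat.cast_succ, ← this, ih]
  have h03 := h.compl_cyc_separatedAt_ne hφ (m := 3) le_rfl (by omega) 0
  rw [zero_add, hconst] at h03
  exact h03 rfl

theorem compl_cycle_not_realizable_two_boxes_general (s d : ℕ) (hs : 9 ≤ s) :
    ¬ RealizableAsPBoxes 2 d (cyc s)ᶜ := fun hreal =>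
  let ⟨_, _, hflat, hrep⟩ := hreal.exists_isBoxRepresentation
  not_isBoxRepresentation_compl_cyc hs hflat hrep

/-- for `s ≥ 9`, `d ≥ 2`, the complement of `C_s` is not realizable as
2-boxes in `ℝ^d`. -/
theorem compl_cycle_not_realizable_two_boxes (s d : ℕ) (hs : 9 ≤ s) (hd : 2 ≤ d) :
    ¬ RealizableAsPBoxes 2 d (cyc s)ᶜ :=
  compl_cycle_not_realizable_two_boxes_general s d hs
end

section
/- There exists a family of 5 axis-parallel segments (1-boxes) in ℝ² whose intersection graph is the complement of C₅; consequently every 4 of these segments can be pierced by 2 points, but the whole family requires 3 points. Hence the Helly number h(d,1,2) for 2-piercing families of segments in ℝ^d (d ≥ 2) is at least 5. -/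
open Set

/-! The segments `[0,3]×{0}`, `{5}×[0,2]`, `{0}×[0,2]`, `[2,5]×{0}`, `[0,5]×{2}` (padded with
zero coordinates in `ℝ^d`) meet exactly along the pentagon `0–2–4–1–3–0`, the complement of
`C₅`. The segments through a common point form a clique of the intersection graph, and this
pentagon is triangle-free, so two points pierce at most four of the segments. Removing segment `v`
leaves a path, covered by the two edges `{v+1, v+3}` and `{v+2, v+4}`, each pierced by a single
point. -/

section Piercing

variable {d : ℕ} {ι : Type*} {B : ι → Set (Fin d → ℝ)}

lemma intersectionGraph_adj {u v : ι} (h : u ≠ v) :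
    (intersectionGraph B).Adj u v ↔ (B u ∩ B v).Nonempty := by
  simp [intersectionGraph, h, Set.inter_comm]

lemma pierceable_iff_pierceableOn_univ [Fintype ι] {n : ℕ} :
    Pierceable B n ↔ PierceableOn B Finset.univ n := by
  simp [Pierceable, PierceableOn]

lemma PierceableOn.mono {S T : Finset ι} {n : ℕ} (hST : S ⊆ T) (hT : PierceableOn B T n) :
    PierceableOn B S n :=
  let ⟨P, hP, hcov⟩ := hT
  ⟨P, hP, fun i hi => hcov i (hST hi)⟩

lemma PierceableOn.union [DecidableEq ι] {S T : Finset ι} {m n : ℕ} (hS : PierceableOn B S m)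
    (hT : PierceableOn B T n) : PierceableOn B (S ∪ T) (m + n) := by
  classical
  obtain ⟨P, hP, hcovP⟩ := hS
  obtain ⟨Q, hQ, hcovQ⟩ := hT
  refine ⟨P ∪ Q, (Finset.card_union_le P Q).trans (by omega), fun i hi => ?_⟩
  rcases Finset.mem_union.1 hi with hi | hi
  · obtain ⟨p, hp, hpi⟩ := hcovP i hi
    exact ⟨p, Finset.mem_union_left Q hp, hpi⟩
  · obtain ⟨q, hq, hqi⟩ := hcovQ i hi
    exact ⟨q, Finset.mem_union_right P hq, hqi⟩

lemma pierceableOn_singleton {i : ι} (hi : (B i).Nonempty) : PierceableOn B {i} 1 := by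
  obtain ⟨p, hp⟩ := hi
  exact ⟨{p}, by simp, by simpa using hp⟩

lemma pierceableOn_pair [DecidableEq ι] {i j : ι} (hij : (B i ∩ B j).Nonempty) :
    PierceableOn B {i, j} 1 := by
  obtain ⟨p, hpi, hpj⟩ := hij
  exact ⟨{p}, by simp, by simp [hpi, hpj]⟩

lemma Pierceable.card_le_mul [Fintype ι] {n k : ℕ} (hB : Pierceable B n)
    (hk : (intersectionGraph B).CliqueFree (k + 1)) : Fintype.card ι ≤ n * k := by
  classical
  obtain ⟨P, hP, hcov⟩ := hB
  choose f hfP hf using hcov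
  by_contra! hlt
  have hpigeon : P.card * k < (Finset.univ : Finset ι).card := by
    rw [Finset.card_univ]
    exact (Nat.mul_le_mul_right k hP).trans_lt hlt
  obtain ⟨p, -, hfiber⟩ :=
    Finset.exists_lt_card_fiber_of_mul_lt_card_of_maps_to (fun i _ => hfP i) hpigeon
  obtain ⟨s, hs, hcard⟩ := Finset.exists_subset_card_eq hfiber
  refine hk s ⟨fun i hi j hj hij => (intersectionGraph_adj hij).2 ⟨p, ?_, ?_⟩, hcard⟩
  · simpa [(Finset.mem_filter.1 (hs hi)).2] using hf i
  · simpa [(Finset.mem_filter.1 (hs hj)).2] using hf j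

end Piercing

lemma ZMod.five_cases : ∀ v : ZMod 5, v = 0 ∨ v = 1 ∨ v = 2 ∨ v = 3 ∨ v = 4 := by decide

lemma cyc_five_compl_adj_iff (u v : ZMod 5) :
    ((cyc 5)ᶜ).Adj u v ↔ u ≠ v ∧ v ≠ u + 1 ∧ u ≠ v + 1 := by
  simp only [SimpleGraph.compl_adj, cyc, SimpleGraph.fromRel_adj]
  tauto

lemma cyc_five_compl_adj_add_two (v : ZMod 5) : ((cyc 5)ᶜ).Adj v (v + 2) := by
  rw [cyc_five_compl_adj_iff]
  revert v
  decide

lemma cyc_five_compl_cliqueFree_three : ((cyc 5)ᶜ).CliqueFree 3 := by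
  intro s hs
  obtain ⟨a, b, c, hab, hac, hbc, -⟩ := SimpleGraph.is3Clique_iff.1 hs
  rw [cyc_five_compl_adj_iff] at hab hac hbc
  revert a b c
  decide

section ComplCycFive

variable {d : ℕ} {B : ZMod 5 → Set (Fin d → ℝ)}

lemma not_pierceable_two_of_intersectionGraph_eq (hB : intersectionGraph B = (cyc 5)ᶜ) :
    ¬ Pierceable B 2 := fun h2 => by
  have := h2.card_le_mul (k := 2) (hB ▸ cyc_five_compl_cliqueFree_three)
  simp at this

lemma pierceableOn_of_intersectionGraph_eq (hB : intersectionGraph B = (cyc 5)ᶜ)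
    {S : Finset (ZMod 5)} (hS : S.card ≤ 4) : PierceableOn B S 2 := by
  obtain ⟨v, hv⟩ : ∃ v, v ∉ S := by
    by_contra! h
    simp [Finset.eq_univ_of_forall h] at hS
  have hmatch (w : ZMod 5) : PierceableOn B {w, w + 2} 1 := by
    have hadj := hB ▸ cyc_five_compl_adj_add_two w
    exact pierceableOn_pair ((intersectionGraph_adj hadj.ne).1 hadj)
  refine ((hmatch (v + 1)).union (hmatch (v + 2))).mono fun w hw => ?_
  have hwv : w ≠ v := fun h => hv (h ▸ hw)
  clear hw hv
  revert w v
  decide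

lemma pierceable_three_of_intersectionGraph_eq (hB : intersectionGraph B = (cyc 5)ᶜ) :
    Pierceable B 3 := by
  have hadj := hB ▸ cyc_five_compl_adj_add_two 0
  have h0 : (B 0).Nonempty := ((intersectionGraph_adj hadj.ne).1 hadj).mono Set.inter_subset_left
  rw [pierceable_iff_pierceableOn_univ]
  refine ((pierceableOn_of_intersectionGraph_eq hB (S := Finset.univ.erase 0) (by simp)).union
    (pierceableOn_singleton h0)).mono fun v _ => ?_
  by_cases hv : v = 0 <;> simp [hv]

end ComplCycFive

section Plane

variable {d : ℕ}

lemma isPBoxIn_one_Icc {lo hi : Fin d → ℝ} (hle : lo ≤ hi) (k : Fin d)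
    (hdeg : ∀ i, lo i = hi i ↔ i ≠ k) : IsPBoxIn 1 d (Set.Icc lo hi) := by
  refine ⟨lo, hi, hle, ?_, ?_⟩
  · have hset : {i : Fin d | lo i = hi i} = {k}ᶜ := by
      ext i
      simp [hdeg]
    rw [hset, Set.ncard_compl, Set.ncard_singleton, Nat.card_eq_fintype_card, Fintype.card_fin]
  · ext x
    simp [Pi.le_def, forall_and]

def planePoint (d : ℕ) (a b : ℝ) : Fin d → ℝ :=
  fun i => if i.val = 0 then a else if i.val = 1 then b else 0

def planeRect (d : ℕ) (a a' b b' : ℝ) : Set (Fin d → ℝ) :=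
  Set.Icc (planePoint d a b) (planePoint d a' b')

lemma planePoint_le_planePoint {a a' b b' : ℝ} (ha : a ≤ a') (hb : b ≤ b') :
    planePoint d a b ≤ planePoint d a' b' := by
  intro i
  simp only [planePoint]
  split_ifs <;> simp [ha, hb]

lemma planePoint_le_planePoint_iff (hd : 2 ≤ d) {a a' b b' : ℝ} :
    planePoint d a b ≤ planePoint d a' b' ↔ a ≤ a' ∧ b ≤ b' :=
  ⟨fun h => ⟨by simpa [planePoint] using h ⟨0, by omega⟩,
      by simpa [planePoint] using h ⟨1, by omega⟩⟩,
    fun h => planePoint_le_planePoint h.1 h.2⟩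

lemma planePoint_sup (a b c e : ℝ) :
    planePoint d a b ⊔ planePoint d c e = planePoint d (max a c) (max b e) := by
  ext i
  simp only [Pi.sup_apply, planePoint]
  split_ifs <;> simp

lemma planePoint_inf (a b c e : ℝ) :
    planePoint d a b ⊓ planePoint d c e = planePoint d (min a c) (min b e) := by
  ext i
  simp only [Pi.inf_apply, planePoint]
  split_ifs <;> simp

lemma isPBoxIn_one_planeRect_horizontal (hd : 2 ≤ d) {a a' : ℝ} (h : a < a') (b : ℝ) :
    IsPBoxIn 1 d (planeRect d a a' b b) := by
  refine isPBoxIn_one_Icc (planePoint_le_planePoint h.le le_rfl) ⟨0, by omega⟩ fun i => ?_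
  simp only [planePoint, ne_eq, Fin.ext_iff]
  split_ifs <;> simp_all [h.ne]

lemma isPBoxIn_one_planeRect_vertical (hd : 2 ≤ d) (a : ℝ) {b b' : ℝ} (h : b < b') :
    IsPBoxIn 1 d (planeRect d a a b b') := by
  refine isPBoxIn_one_Icc (planePoint_le_planePoint le_rfl h.le) ⟨1, by omega⟩ fun i => ?_
  simp only [planePoint, ne_eq, Fin.ext_iff]
  split_ifs <;> simp_all [h.ne]

lemma planeRect_inter_nonempty_iff (hd : 2 ≤ d) {a a' b b' c c' e e' : ℝ} :
    (planeRect d a a' b b' ∩ planeRect d c c' e e').Nonempty ↔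
      max a c ≤ min a' c' ∧ max b e ≤ min b' e' := by
  rw [planeRect, planeRect, Set.Icc_inter_Icc, Set.nonempty_Icc, planePoint_sup, planePoint_inf,
    planePoint_le_planePoint_iff hd]

end Plane

def complCycFiveSegments (d : ℕ) : ZMod 5 → Set (Fin d → ℝ) :=
  ![planeRect d 0 3 0 0, planeRect d 5 5 0 2, planeRect d 0 0 0 2, planeRect d 2 5 0 0,
    planeRect d 0 5 2 2]

section Segments

variable {d : ℕ}

lemma isPBoxIn_one_complCycFiveSegments (hd : 2 ≤ d) (v : ZMod 5) :
    IsPBoxIn 1 d (complCycFiveSegments d v) := by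
  rcases ZMod.five_cases v with rfl | rfl | rfl | rfl | rfl
  · exact isPBoxIn_one_planeRect_horizontal hd (by norm_num) 0
  · exact isPBoxIn_one_planeRect_vertical hd 5 (by norm_num)
  · exact isPBoxIn_one_planeRect_vertical hd 0 (by norm_num)
  · exact isPBoxIn_one_planeRect_horizontal hd (by norm_num) 0
  · exact isPBoxIn_one_planeRect_horizontal hd (by norm_num) 2

lemma intersectionGraph_complCycFiveSegments (hd : 2 ≤ d) :
    intersectionGraph (complCycFiveSegments d) = (cyc 5)ᶜ := by
  ext u v
  by_cases huv : u = v
  · simp [huv]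
  rw [intersectionGraph_adj huv, cyc_five_compl_adj_iff]
  rcases ZMod.five_cases u with rfl | rfl | rfl | rfl | rfl <;>
    rcases ZMod.five_cases v with rfl | rfl | rfl | rfl | rfl <;>
    first
    | exact absurd rfl huv
    | (simp [complCycFiveSegments, planeRect_inter_nonempty_iff hd]; norm_num <;> decide)

end Segments

/-- there are 5 segments in `ℝ²` whose intersection graph is the
complement of `C₅`; every 4 of them are 2-pierceable but the whole family needs
3 points. Hence `h(d,1,2) ≥ 5` for every `d ≥ 2`. -/
theorem segments_realizing_compl_C5_and_helly_lower_bound :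
    (∃ B : ZMod 5 → Set (Fin 2 → ℝ), (∀ v, IsPBoxIn 1 2 (B v)) ∧
      (∀ u v : ZMod 5, u ≠ v → (((cyc 5)ᶜ).Adj u v ↔ (B u ∩ B v).Nonempty)) ∧
      (∀ S : Finset (ZMod 5), S.card ≤ 4 → PierceableOn B S 2) ∧
      ¬ Pierceable B 2 ∧ Pierceable B 3) ∧
    (∀ d : ℕ, 2 ≤ d → ∃ (ι : Type) (_ : Fintype ι) (B : ι → Set (Fin d → ℝ)),
      (∀ i, IsPBoxIn 1 d (B i)) ∧
      (∀ S : Finset ι, S.card ≤ 4 → PierceableOn B S 2) ∧ ¬ Pierceable B 2) := by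
  have hplane := intersectionGraph_complCycFiveSegments le_rfl
  refine ⟨⟨complCycFiveSegments 2, isPBoxIn_one_complCycFiveSegments le_rfl, fun u v huv => ?_,
      fun S hS => pierceableOn_of_intersectionGraph_eq hplane hS,
      not_pierceable_two_of_intersectionGraph_eq hplane,
      pierceable_three_of_intersectionGraph_eq hplane⟩, fun d hd => ?_⟩
  · rw [← hplane, intersectionGraph_adj huv]
  · have hspace := intersectionGraph_complCycFiveSegments hd
    exact ⟨ZMod 5, inferInstance, complCycFiveSegments d, isPBoxIn_one_complCycFiveSegments hd,
      fun S hS => pierceableOn_of_intersectionGraph_eq hspace hS,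
      not_pierceable_two_of_intersectionGraph_eq hspace⟩
end

section
/- For m ≥ 3 and d ≥ m: every finite family of axis-parallel m-dimensional boxes in ℝ^d is 2-pierceable if and only if every subfamily of cardinality 3m (for m odd) respectively 3m − 1 (for m even) is 2-pierceable. -/
open Set

/-!
Let `G` be the disjointness graph of the family. If `G` is bipartite, each colour class is a
pairwise intersecting family of boxes, hence has a common point, and two points pierce everything.
Otherwise a shortest odd closed walk `B₀, …, B_{n-1}` in `G` is a chordless odd cycle: consecutive
boxes are disjoint, all other pairs meet. Such a cycle cannot be pierced by two points, so it
suffices to show `n ≤ 3m`.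

Fix a coordinate. Call `j` a gap if `B_j, B_{j+1}` are separated in this coordinate, and a point
if `B_j` is degenerate in it. Two far-apart gaps are impossible (each of `B_e, B_{e+1}` would meet
both of `B_{e'}, B_{e'+1}`), and a degenerate box cannot meet both sides of a gap. Hence a
coordinate with a gap carries at most three gaps and at most five gaps and points together.
Every `j` is a gap in some coordinate, and every box has at least `d - m` degenerate coordinates;
if `t` coordinates carry gaps this gives `n ≤ 3t` and `n (d - m + 1) ≤ 5t + n (d - t)`, which
is incompatible with `n > 3m` for odd `n` and `m ≥ 3`.
-/

open Set
open scoped Finset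

theorem Set.Icc_inter_Icc_nonempty_iff_forall_s14 {ι : Type*} {α : ι → Type*}
    [∀ i, Preorder (α i)] {a b c e : ∀ i, α i} :
    (Icc a b ∩ Icc c e).Nonempty ↔ ∀ i, (Icc (a i) (b i) ∩ Icc (c i) (e i)).Nonempty := by
  rw [← pi_univ_Icc, ← pi_univ_Icc, ← pi_inter_distrib, univ_pi_nonempty_iff]

/- Both `Icc a₁ b₁` and `Icc a₂ b₂` contain the stretch between the two disjoint intervals. -/
theorem Set.Icc_inter_Icc_nonempty_of_meet_disjoint {α : Type*} [LinearOrder α]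
    {a₁ b₁ a₂ b₂ c₁ d₁ c₂ d₂ : α} (hJ : Disjoint (Icc c₁ d₁) (Icc c₂ d₂))
    (h₁₁ : (Icc a₁ b₁ ∩ Icc c₁ d₁).Nonempty) (h₁₂ : (Icc a₁ b₁ ∩ Icc c₂ d₂).Nonempty)
    (h₂₁ : (Icc a₂ b₂ ∩ Icc c₁ d₁).Nonempty) (h₂₂ : (Icc a₂ b₂ ∩ Icc c₂ d₂).Nonempty) :
    (Icc a₁ b₁ ∩ Icc a₂ b₂).Nonempty := by
  rw [← not_disjoint_iff_nonempty_inter] at *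
  simp only [disjoint_iff_inter_eq_empty, Icc_inter_Icc, Icc_eq_empty_iff, not_not, sup_le_iff,
    le_inf_iff] at *
  grind

theorem Finset.exists_forall_mem_Icc {ι α : Type*} [Lattice α] [Nonempty α] (s : Finset ι)
    (lo hi : ι → α) (h : ∀ i ∈ s, ∀ j ∈ s, lo i ≤ hi j) :
    ∃ x, ∀ i ∈ s, x ∈ Set.Icc (lo i) (hi i) := by
  rcases s.eq_empty_or_nonempty with rfl | hs
  · exact ⟨Classical.arbitrary α, by simp⟩
  · exact ⟨s.sup' hs lo, fun i hi' =>
      ⟨le_sup' lo hi', sup'_le hs lo fun j hj' => h j hj' i hi'⟩⟩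

namespace ZMod

theorem not_forall_add_one_iff_not_of_odd {n : ℕ} (hn : Odd n) (P : ZMod n → Prop) :
    ¬ ∀ j, (P (j + 1) ↔ ¬ P j) := by
  intro h
  have key : ∀ t : ℕ, (P t ↔ P 0) ↔ Even t := by
    intro t
    induction t with
    | zero => simp
    | succ t ih => rw [Nat.cast_succ, h, Nat.even_add_one, ← ih]; tauto
  exact Nat.not_even_iff_odd.2 hn ((key n).1 (by rw [natCast_self]))

section

variable {n : ℕ} [NeZero n]

theorem card_le_of_forall_sub_val_lt {S : Finset (ZMod n)} (c : ZMod n) {w : ℕ}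
    (h : ∀ x ∈ S, (x - c).val < w) : #S ≤ w := by
  simpa using Finset.card_le_card_of_injOn (fun x => (x - c).val) (t := Finset.range w)
    (fun x hx => by simpa using h x hx)
    (fun x _ y _ hxy => by simpa using val_injective n hxy)

theorem exists_forall_sub_val_le_two (hn : 7 ≤ n) {S : Finset (ZMod n)} (hS : S.Nonempty)
    (h : ∀ x ∈ S, ∀ y ∈ S, (y - x).val ≤ 2 ∨ n ≤ (y - x).val + 2) :
    ∃ c ∈ S, ∀ x ∈ S, (x - c).val ≤ 2 := by
  obtain ⟨a, ha⟩ := hS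
  have h2 : (2 : ZMod n).val = 2 := by rw [val_ofNat, Nat.mod_eq_of_lt (by omega)]
  -- offsets from `a - 2` lie in `0, …, 4`; the element of least offset is the left end
  have hwin : ∀ x ∈ S, (x - (a - 2)).val ≤ 4 := by
    intro x hx
    have hx' := (x - a).val_lt
    rw [sub_sub_eq_add_sub, add_sub_right_comm]
    rcases h a ha x hx with hle | hge
    · rw [val_add_of_lt (by omega)]; omega
    · rw [val_add_of_le (by omega)]; omega
  obtain ⟨c, hc, hmin⟩ := S.exists_min_image (fun x => (x - (a - 2)).val) ⟨a, ha⟩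
  refine ⟨c, hc, fun x hx => ?_⟩
  have hxc : (x - c).val ≤ 4 := by
    rw [← sub_sub_sub_cancel_right x c (a - 2), val_sub (hmin x hx)]
    have := hwin x hx
    omega
  have := h c hc x hx
  omega

end

end ZMod

namespace SimpleGraph

variable {V : Type*} {G : SimpleGraph V}

def IsCyclicWalk {n : ℕ} (G : SimpleGraph V) (v : ZMod n → V) : Prop :=
  ∀ j, G.Adj (v j) (v (j + 1))

theorem isCyclicWalk_of_closed {n : ℕ} [NeZero n] {f : ℕ → V} (hf : f n = f 0)
    (h : ∀ a < n, G.Adj (f a) (f (a + 1))) : G.IsCyclicWalk fun j : ZMod n => f j.val := by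
  intro j
  show G.Adj (f j.val) (f (j + 1).val)
  have hval : (j + 1).val = (j.val + 1) % n := by
    rw [← ZMod.val_natCast, Nat.cast_succ, ZMod.natCast_zmod_val]
  rcases (show j.val + 1 ≤ n from j.val_lt).lt_or_eq with hlt | heq
  · rw [hval, Nat.mod_eq_of_lt hlt]
    exact h _ j.val_lt
  · rw [hval, heq, Nat.mod_self, ← hf]
    simpa [heq] using h _ j.val_lt

theorem IsCyclicWalk.exists_of_adj {n : ℕ} {v : ZMod n → V} (hv : G.IsCyclicWalk v)
    (j : ZMod n) (s : ℕ) (hchord : G.Adj (v (j + s)) (v j)) :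
    ∃ w : ZMod (s + 1) → V, G.IsCyclicWalk w := by
  refine ⟨_, isCyclicWalk_of_closed (f := fun a => if a ≤ s then v (j + a) else v j)
    (by simp) fun a ha => ?_⟩
  rcases (Nat.lt_succ_iff.1 ha).lt_or_eq with has | rfl
  · simpa [has.le, Nat.succ_le_of_lt has, add_assoc] using hv (j + a)
  · simpa using hchord

/- A chord splits the walk into two shorter closed walks whose lengths add up to `n + 2`,
so one of them is odd. -/
theorem exists_odd_chordless_isCyclicWalk (h : ¬ G.Colorable 2) :
    ∃ n, Odd n ∧ ∃ v : ZMod n → V, G.IsCyclicWalk v ∧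
      ∀ j (s : ℕ), 2 ≤ s → s + 2 ≤ n → ¬ G.Adj (v j) (v (j + s)) := by
  have hex : ∃ n, Odd n ∧ ∃ v : ZMod n → V, G.IsCyclicWalk v := by
    obtain ⟨u, w, hw⟩ : ∃ u, ∃ w : G.Walk u u, Odd w.length := by
      simpa [two_colorable_iff_forall_loop_even] using h
    have : NeZero w.length := ⟨hw.pos.ne'⟩
    exact ⟨_, hw, _, isCyclicWalk_of_closed (f := w.getVert) (by simp)
      fun a ha => w.adj_getVert_succ ha⟩
  obtain ⟨n, hmin⟩ := exists_minimal_of_wellFoundedLT _ hex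
  obtain ⟨hn, v, hv⟩ := hmin.prop
  refine ⟨n, hn, v, hv, fun j s hs hsn hadj => ?_⟩
  obtain ⟨w₁, hw₁⟩ := hv.exists_of_adj j s hadj.symm
  obtain ⟨w₂, hw₂⟩ := hv.exists_of_adj (j + s) (n - s) <| by
    rwa [add_assoc, ← Nat.cast_add, Nat.add_sub_cancel' (by omega), ZMod.natCast_self, add_zero]
  rcases Nat.even_or_odd (s + 1) with he | ho
  · refine hmin.not_prop_of_lt (y := n - s + 1) (by omega) ⟨?_, w₂, hw₂⟩
    rw [Nat.odd_iff] at hn ⊢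
    rw [Nat.even_iff] at he
    omega
  · exact hmin.not_prop_of_lt (y := s + 1) (by omega) ⟨ho, w₁, hw₁⟩

end SimpleGraph

theorem IsPBoxIn.exists_Icc {p d : ℕ} {s : Set (Fin d → ℝ)} (h : IsPBoxIn p d s) :
    ∃ lo hi : Fin d → ℝ, lo ≤ hi ∧ {i | lo i = hi i}.ncard = d - p ∧ s = Icc lo hi := by
  obtain ⟨lo, hi, hle, hdeg, rfl⟩ := h
  exact ⟨lo, hi, hle, hdeg, by ext x; simp [Pi.le_def, forall_and]⟩

section Disjointness

variable {ι : Type*} {d : ℕ} {B : ι → Set (Fin d → ℝ)}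

theorem compl_intersectionGraph_adj_iff (hB : ∀ i, (B i).Nonempty) {i j : ι} :
    (intersectionGraph B)ᶜ.Adj i j ↔ Disjoint (B i) (B j) := by
  rcases eq_or_ne i j with rfl | hij
  · simpa using (hB i).ne_empty
  · simp [intersectionGraph, hij, ← not_disjoint_iff_nonempty_inter, disjoint_comm]

theorem pierceable_two_of_colorable [Fintype ι]
    (hB : ∀ i, ∃ lo hi : Fin d → ℝ, lo ≤ hi ∧ B i = Icc lo hi)
    (hG : (intersectionGraph B)ᶜ.Colorable 2) : Pierceable B 2 := by
  classical
  obtain ⟨c⟩ := hG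
  choose lo hi hle hBIcc using hB
  obtain rfl : B = fun i => Icc (lo i) (hi i) := funext hBIcc
  have hne : ∀ i, (Icc (lo i) (hi i)).Nonempty := fun i => nonempty_Icc.2 (hle i)
  have hmeet : ∀ i j, c i = c j → lo i ≤ hi j := by
    intro i j hij
    obtain ⟨x, hxi, hxj⟩ := not_disjoint_iff_nonempty_inter.1 fun hdisj =>
      c.valid ((compl_intersectionGraph_adj_iff hne).2 hdisj) hij
    exact hxi.1.trans hxj.2
  have hclass : ∀ a : Fin 2, ∃ x, ∀ i, c i = a → x ∈ Icc (lo i) (hi i) := fun a => by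
    obtain ⟨x, hx⟩ := Finset.exists_forall_mem_Icc {i | c i = a} lo hi fun i hi' j hj' => by
      simp only [Finset.mem_filter, Finset.mem_univ, true_and] at hi' hj'
      exact hmeet i j (hi'.trans hj'.symm)
    exact ⟨x, fun i hi' => hx i (by simpa using hi')⟩
  choose x hx using hclass
  exact ⟨Finset.univ.image x, Finset.card_image_le.trans (by simp),
    fun i => ⟨x (c i), by simp, hx _ i rfl⟩⟩

theorem not_pierceableOn_two_of_odd [DecidableEq ι] {n : ℕ} [NeZero n] (hn : Odd n)
    (v : ZMod n → ι) (hv : ∀ j, Disjoint (B (v j)) (B (v (j + 1)))) :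
    ¬ PierceableOn B (Finset.univ.image v) 2 := by
  rintro ⟨P, hP, hcover⟩
  have hcov : ∀ j, ∃ p ∈ P, p ∈ B (v j) := fun j => hcover _ (by simp)
  obtain ⟨p, hp, -⟩ := hcov 0
  refine ZMod.not_forall_add_one_iff_not_of_odd hn (fun j => p ∈ B (v j)) fun j =>
    ⟨fun hj₁ hj => disjoint_left.1 (hv j) hj hj₁, fun hj => ?_⟩
  obtain ⟨q, hq, hqj⟩ := hcov j
  obtain ⟨r, hr, hrj⟩ := hcov (j + 1)
  by_contra hj₁
  have hqp : q ≠ p := by rintro rfl; exact hj hqj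
  have hrp : r ≠ p := by rintro rfl; exact hj₁ hrj
  have hrq : r ≠ q := by rintro rfl; exact disjoint_left.1 (hv j) hqj hrj
  exact hP.not_gt (Finset.two_lt_card.2 ⟨p, hp, q, hq, r, hr, hqp.symm, hrp.symm, hrq.symm⟩)

end Disjointness

def NonconsecutiveMeet {β : Type*} {n : ℕ} (I : ZMod n → Set β) : Prop :=
  ∀ j (s : ℕ), 2 ≤ s → s + 2 ≤ n → (I j ∩ I (j + s)).Nonempty

theorem NonconsecutiveMeet.inter_nonempty {β : Type*} {n : ℕ} {I : ZMod n → Set β}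
    (h : NonconsecutiveMeet I) {i j : ZMod n} (s : ℕ) (hij : i + s = j) (hs : 2 ≤ s)
    (hsn : s + 2 ≤ n) : (I i ∩ I j).Nonempty :=
  hij ▸ h i s hs hsn

namespace CyclicIntervals

variable {α : Type*} [LinearOrder α] {n : ℕ} [NeZero n] (lo hi : ZMod n → α)

open Classical in
noncomputable def gaps : Finset (ZMod n) :=
  {j | Disjoint (Icc (lo j) (hi j)) (Icc (lo (j + 1)) (hi (j + 1)))}

def points : Finset (ZMod n) := {j | lo j = hi j}

variable {lo hi}

theorem mem_gaps {j : ZMod n} :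
    j ∈ gaps lo hi ↔ Disjoint (Icc (lo j) (hi j)) (Icc (lo (j + 1)) (hi (j + 1))) := by
  simp [gaps]

theorem mem_points {j : ZMod n} : j ∈ points lo hi ↔ lo j = hi j := by
  simp [points]

theorem sub_val_of_mem_gaps (h : NonconsecutiveMeet fun j => Icc (lo j) (hi j))
    {e e' : ZMod n} (he : e ∈ gaps lo hi) (he' : e' ∈ gaps lo hi) :
    (e' - e).val ≤ 2 ∨ n ≤ (e' - e).val + 2 := by
  obtain ⟨s, hs, rfl⟩ : ∃ s < n, e' = e + s := ⟨(e' - e).val, ZMod.val_lt _, by simp⟩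
  rw [add_sub_cancel_left, ZMod.val_cast_of_lt hs]
  by_contra! hfar
  refine not_disjoint_iff_nonempty_inter.2 ?_ (mem_gaps.1 he)
  exact Icc_inter_Icc_nonempty_of_meet_disjoint (mem_gaps.1 he')
    (h.inter_nonempty s rfl (by omega) (by omega))
    (h.inter_nonempty (s + 1) (by push_cast; ring) (by omega) (by omega))
    (h.inter_nonempty (s - 1) (by rw [Nat.cast_sub (by omega)]; ring) (by omega) (by omega))
    (h.inter_nonempty s (by ring) (by omega) (by omega))

theorem add_two_sub_val_of_mem_points (hn : 5 ≤ n)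
    (h : NonconsecutiveMeet fun j => Icc (lo j) (hi j)) {e j : ZMod n} (he : e ∈ gaps lo hi)
    (hj : j ∈ points lo hi) : 0 < (j + 2 - e).val ∧ (j + 2 - e).val < 5 := by
  obtain ⟨s, hs, rfl⟩ : ∃ s < n, j = e + s := ⟨(j - e).val, ZMod.val_lt _, by simp⟩
  have hnear : s ≤ 2 ∨ s + 1 = n := by
    by_contra! hfar
    have hpt : Icc (lo (e + s)) (hi (e + s)) = {hi (e + s)} := by
      rw [mem_points.1 hj, Icc_self]
    have h₀ := h.inter_nonempty (i := e) (j := e + s) s rfl (by omega) (by omega)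
    have h₁ := h.inter_nonempty (i := e + 1) (j := e + s) (s - 1)
      (by rw [Nat.cast_sub (by omega)]; ring) (by omega) (by omega)
    rw [hpt, inter_singleton_nonempty] at h₀ h₁
    exact disjoint_left.1 (mem_gaps.1 he) h₀ h₁
  rw [show e + s + 2 - e = ((s + 2 : ℕ) : ZMod n) by push_cast; ring, ZMod.val_natCast]
  rcases hnear with hs2 | rfl
  · rw [Nat.mod_eq_of_lt (by omega)]; omega
  · rw [show s + 2 = 1 + (s + 1) by ring, Nat.add_mod_right, Nat.mod_eq_of_lt (by omega)]; omega

/- The points shifted by two are disjoint from the gaps, and both lie in the window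
`c, …, c + 4` starting at the leftmost gap `c`. -/
theorem card_gaps_le (hn : 7 ≤ n) (h : NonconsecutiveMeet fun j => Icc (lo j) (hi j))
    (hE : (gaps lo hi).Nonempty) :
    #(gaps lo hi) ≤ 3 ∧ #(gaps lo hi) + #(points lo hi) ≤ 5 := by
  obtain ⟨c, hc, hwin⟩ := ZMod.exists_forall_sub_val_le_two hn hE
    fun x hx y hy => sub_val_of_mem_gaps h hx hy
  have hpt := fun {e j : ZMod n} => add_two_sub_val_of_mem_points (e := e) (j := j) (by omega) h
  refine ⟨ZMod.card_le_of_forall_sub_val_lt c fun x hx => by have := hwin x hx; omega, ?_⟩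
  have hdisj : Disjoint (gaps lo hi) ((points lo hi).image (· + 2)) := by
    refine Finset.disjoint_right.2 fun x hx he => ?_
    obtain ⟨j, hj, rfl⟩ := Finset.mem_image.1 hx
    simpa using (hpt he hj).1
  calc #(gaps lo hi) + #(points lo hi) = #(gaps lo hi ∪ (points lo hi).image (· + 2)) := by
        rw [Finset.card_union_of_disjoint hdisj,
          Finset.card_image_of_injective _ (add_left_injective 2)]
    _ ≤ 5 := by
      refine ZMod.card_le_of_forall_sub_val_lt c fun x hx => ?_
      rcases Finset.mem_union.1 hx with hx | hx
      · have := hwin x hx; omega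
      · obtain ⟨j, hj, rfl⟩ := Finset.mem_image.1 hx
        exact (hpt hc hj).2

end CyclicIntervals

theorem le_three_mul_of_sum_card_le {κ β : Type*} [Fintype κ] {m n : ℕ} (hm : 3 ≤ m)
    (hn : Odd n) (E X : κ → Finset β) (hE : n ≤ ∑ k, #(E k))
    (hX : n * (Fintype.card κ - m) ≤ ∑ k, #(X k)) (hXn : ∀ k, #(X k) ≤ n)
    (hloc : ∀ k, (E k).Nonempty → #(E k) ≤ 3 ∧ #(E k) + #(X k) ≤ 5) :
    n ≤ 3 * m := by
  by_contra! hlt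
  set t := #{k | (E k).Nonempty}
  have hcoord : ∀ k, #(E k) ≤ (if (E k).Nonempty then 3 else 0) ∧
      #(E k) + #(X k) ≤ (if (E k).Nonempty then 5 else n) := by
    intro k
    split_ifs with hk
    · exact hloc k hk
    · rw [Finset.not_nonempty_iff_eq_empty.1 hk, Finset.card_empty, zero_add]
      exact ⟨le_rfl, hXn k⟩
  have htd : t ≤ Fintype.card κ := Finset.card_le_univ _
  have h3 : ∑ k, #(E k) ≤ 3 * t := by
    refine (Finset.sum_le_sum fun k _ => (hcoord k).1).trans_eq ?_
    simp [Finset.sum_ite, mul_comm, t]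
  have h5 : ∑ k, (#(E k) + #(X k)) ≤ 5 * t + n * (Fintype.card κ - t) := by
    have hcompl : #{k | ¬(E k).Nonempty} = Fintype.card κ - t := by
      have := Finset.card_filter_add_card_filter_not (s := Finset.univ)
        (p := fun k => (E k).Nonempty)
      rw [Finset.card_univ] at this
      omega
    refine (Finset.sum_le_sum fun k _ => (hcoord k).2).trans_eq ?_
    rw [Finset.sum_ite, Finset.sum_const, Finset.sum_const, smul_eq_mul, smul_eq_mul, hcompl]
    ring
  rw [Finset.sum_add_distrib] at h5
  have hmt : m < t := by omega
  have hmd : m ≤ Fintype.card κ := by omega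
  zify [hmd, htd] at hE hX h5
  have : 2 * n ≤ 5 * m + 5 := by nlinarith
  have := Nat.odd_iff.1 hn
  omega

open CyclicIntervals in
theorem le_three_mul_of_nonconsecutiveMeet {α : Type*} [LinearOrder α] {m d n : ℕ}
    (hm : 3 ≤ m) (hn : Odd n) (lo hi : ZMod n → Fin d → α)
    (hdeg : ∀ j, d - m ≤ {k | lo j k = hi j k}.ncard)
    (hsep : ∀ j, Disjoint (Icc (lo j) (hi j)) (Icc (lo (j + 1)) (hi (j + 1))))
    (hmeet : NonconsecutiveMeet fun j => Icc (lo j) (hi j)) :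
    n ≤ 3 * m := by
  have : NeZero n := ⟨hn.pos.ne'⟩
  by_contra! hlt
  set E := fun k : Fin d => gaps (fun j => lo j k) (fun j => hi j k)
  set X := fun k : Fin d => points (fun j => lo j k) (fun j => hi j k)
  have hgaps : n ≤ ∑ k, #(E k) := by
    have hcover : (Finset.univ : Finset (ZMod n)) ⊆ Finset.univ.biUnion E := by
      intro j _
      by_contra! hj
      simp only [Finset.mem_biUnion, Finset.mem_univ, true_and, not_exists, E, mem_gaps,
        not_disjoint_iff_nonempty_inter] at hj
      exact not_disjoint_iff_nonempty_inter.2 (Icc_inter_Icc_nonempty_iff_forall_s14.2 hj) (hsep j)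
    simpa using (Finset.card_le_card hcover).trans Finset.card_biUnion_le
  have hpoints : n * (Fintype.card (Fin d) - m) ≤ ∑ k, #(X k) :=
    calc n * (Fintype.card (Fin d) - m) = ∑ j : ZMod n, (d - m) := by simp
      _ ≤ ∑ j, #{k | lo j k = hi j k} := Finset.sum_le_sum fun j _ => by
        simpa [Set.ncard_eq_toFinset_card'] using hdeg j
      _ = ∑ k, #(X k) := Finset.sum_card_bipartiteAbove_eq_sum_card_bipartiteBelow _
  refine hlt.not_ge (le_three_mul_of_sum_card_le hm hn E X hgaps hpoints
    (fun k => (Finset.card_le_univ _).trans (ZMod.card n).le) fun k hk => ?_)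
  exact card_gaps_le (by omega)
    (fun j s h₂ hs => Icc_inter_Icc_nonempty_iff_forall_s14.1 (hmeet j s h₂ hs) k) hk

theorem helly_two_piercing_m_boxes_general {ι : Type*} [Fintype ι] (m d : ℕ) (hm : 3 ≤ m)
    (B : ι → Set (Fin d → ℝ)) (hB : ∀ i, IsPBoxIn m d (B i)) :
    Pierceable B 2 ↔
      ∀ S : Finset ι, S.card ≤ (if Odd m then 3 * m else 3 * m - 1) →
        PierceableOn B S 2 := by
  classical
  refine ⟨fun ⟨P, hP, hPB⟩ S _ => ⟨P, hP, fun i _ => hPB i⟩, fun hsmall => ?_⟩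
  choose lo hi hle hdeg hBIcc using fun i => (hB i).exists_Icc
  obtain rfl : B = fun i => Icc (lo i) (hi i) := funext hBIcc
  have hne : ∀ i, (Icc (lo i) (hi i)).Nonempty := fun i => nonempty_Icc.2 (hle i)
  by_contra hnot
  obtain ⟨n, hn, v, hv, hchordless⟩ := SimpleGraph.exists_odd_chordless_isCyclicWalk
    (mt (pierceable_two_of_colorable fun i => ⟨lo i, hi i, hle i, rfl⟩) hnot)
  have : NeZero n := ⟨hn.pos.ne'⟩
  have hsep : ∀ j, Disjoint (Icc (lo (v j)) (hi (v j))) (Icc (lo (v (j + 1))) (hi (v (j + 1)))) :=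
    fun j => (compl_intersectionGraph_adj_iff hne).1 (hv j)
  have hlen : n ≤ 3 * m := le_three_mul_of_nonconsecutiveMeet hm hn (fun j => lo (v j))
    (fun j => hi (v j)) (fun j => (hdeg (v j)).ge) hsep fun j s hs hsn =>
      not_disjoint_iff_nonempty_inter.1 fun hdisj => hchordless j s hs hsn
        ((compl_intersectionGraph_adj_iff hne).2 hdisj)
  refine not_pierceableOn_two_of_odd hn v hsep (hsmall _ (Finset.card_image_le.trans ?_))
  rw [Finset.card_univ, ZMod.card]
  split_ifs with hmo
  · exact hlen
  · obtain ⟨k, rfl⟩ := Nat.not_odd_iff_even.1 hmo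
    obtain ⟨l, rfl⟩ := hn
    omega

/-- for `m ≥ 3`, `d ≥ m`, a finite family of `m`-boxes in `ℝ^d` is
2-pierceable iff every subfamily of cardinality `3m` (`m` odd) resp. `3m - 1`
(`m` even) is 2-pierceable. -/
theorem helly_two_piercing_m_boxes {ι : Type*} [Fintype ι] (m d : ℕ) (hm : 3 ≤ m)
    (hd : m ≤ d) (B : ι → Set (Fin d → ℝ)) (hB : ∀ i, IsPBoxIn m d (B i)) :
    Pierceable B 2 ↔
      ∀ S : Finset ι, S.card ≤ (if Odd m then 3 * m else 3 * m - 1) →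
        PierceableOn B S 2 :=
  helly_two_piercing_m_boxes_general m d hm B hB
end
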